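/- arXiv:2503.21390 — 2 statements merged into one kernel-verified Lean document; each statement's English description precedes it below -/
import Mathlib

section
/- Let F be a formal group law over a commutative ring R with inverse ι. Then there is a unique G(z,w) ∈ R⟦z,w⟧ with F(z,ι(w)) = G(z,w)·(z−w); this G is a unit of the power series ring R⟦z,w⟧; and its diagonal value (the series G(z,z) ∈ R⟦z⟧ whose coefficient of z^n is Σ_{i+j=n} G_{i,j}) equals F^{0,1}(z,0)^{-1}. In particular, if R is a ℚ-algebra then G(z,z) = φ'(z), the derivative of the logarithm of F. -/
/-!
Coefficient-wise formal calculus for vertex `F`-algebras, following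
M. Upmeier, "Vertex F-Algebras and Their Associated Lie Algebra".

Series in one, two or three variables are represented by their coefficient
functions `ℤ → R`, `ℤ → ℤ → R`, …; products are given by coefficient-wise
(finite) sums, expressed via `finsum` (`∑ᶠ`).
-/

open scoped BigOperators

noncomputable section

/-- Generalized binomial coefficient `C(n,k) = n(n-1)⋯(n-k+1)/k!` for `n : ℤ`, `k : ℕ`. -/
def zbinom (n : ℤ) (k : ℕ) : ℤ :=
  if 0 ≤ n then (n.toNat.choose k : ℤ)
  else (-1 : ℤ) ^ k * (((k : ℤ) - n - 1).toNat.choose k : ℤ)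

/-- `C(n,m)` for integer `m`, with `C(n,m) = 0` for `m < 0`. -/
def zbinomZ (n m : ℤ) : ℤ := if m < 0 then 0 else zbinom n m.toNat

/-- `(-1)^n` for `n : ℤ`. -/
def msign (n : ℤ) : ℤ := if Even n then 1 else -1

section Series

variable {R : Type*} [CommRing R] {M : Type*} [AddCommGroup M] [Module R M]

/-- Product of a one-variable series with `R`-coefficients with an `M`-valued one. -/
def mulS (f : ℤ → R) (g : ℤ → M) : ℤ → M := fun n => ∑ᶠ i : ℤ, f i • g (n - i)

/-- The constant series `1` (one variable). -/
def oneS (R : Type*) [CommRing R] : ℤ → R := fun n => if n = 0 then 1 else 0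

/-- Natural powers of a one-variable series. -/
def pow1 (f : ℤ → R) : ℕ → ℤ → R
  | 0 => oneS R
  | k + 1 => mulS f (pow1 f k)

/-- Product of two-variable series. -/
def mulS2 (f : ℤ → ℤ → R) (g : ℤ → ℤ → M) : ℤ → ℤ → M :=
  fun a b => ∑ᶠ p : ℤ × ℤ, f p.1 p.2 • g (a - p.1) (b - p.2)

/-- The constant series `1` (two variables). -/
def oneS2 (R : Type*) [CommRing R] : ℤ → ℤ → R := fun a b => if a = 0 ∧ b = 0 then 1 else 0

/-- Natural powers of a two-variable series. -/
def pow2 (f : ℤ → ℤ → R) : ℕ → ℤ → ℤ → R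
  | 0 => oneS2 R
  | k + 1 => mulS2 f (pow2 f k)

/-- `f ∈ M((z))`: only finitely many negative powers. -/
def IsLaurent (f : ℤ → M) : Prop := ∃ N : ℤ, ∀ n : ℤ, n < N → f n = 0

/-- `f ∈ M((z,w))`: only finitely many nonzero coefficients with some negative index. -/
def IsLaurent2 (f : ℤ → ℤ → M) : Prop :=
  {p : ℤ × ℤ | (p.1 < 0 ∨ p.2 < 0) ∧ f p.1 p.2 ≠ 0}.Finite

/-- Formal derivative of a one-variable series. -/
def fderiv1 (f : ℤ → R) : ℤ → R := fun n => ((n + 1 : ℤ) : R) * f (n + 1)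

/-- The polynomial `z - w` as a two-variable series. -/
def zmw (R : Type*) [CommRing R] : ℤ → ℤ → R :=
  fun i j => if i = 1 ∧ j = 0 then 1 else if i = 0 ∧ j = 1 then -1 else 0

/-- `∂/∂w` of a two-variable series. -/
def d01 (f : ℤ → ℤ → R) : ℤ → ℤ → R := fun i j => ((j + 1 : ℤ) : R) * f i (j + 1)

/-- `∂/∂z` of a two-variable series. -/
def d10 (f : ℤ → ℤ → R) : ℤ → ℤ → R := fun i j => ((i + 1 : ℤ) : R) * f (i + 1) j

/-- Substitution `p(f(z,w))` of a two-variable series (zero constant term) into a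
one-variable power series `p`. -/
def comp2 (p : ℤ → R) (f : ℤ → ℤ → R) : ℤ → ℤ → R :=
  fun a b => ∑ᶠ m : ℕ, p (m : ℤ) * pow2 f m a b

/-- Substitution `p(f(z))` of a one-variable series (zero constant term) into a
one-variable power series `p`. -/
def comp1 (p : ℤ → R) (f : ℤ → R) : ℤ → R :=
  fun a => ∑ᶠ m : ℕ, p (m : ℤ) * pow1 f m a

/-- `(G - z)/z` for `G ≡ z (mod w)`. -/
def hzS (G : ℤ → ℤ → R) : ℤ → ℤ → R := fun i j => G (i + 1) j - oneS2 R i j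

/-- Integer powers `i_{z,w} G^n`, for `G ≡ z (mod w)`, expanded in `R((z))⟦w⟧`:
the Newton expansion `z^n ∑_k C(n,k) ((G-z)/z)^k`. -/
def izwPow (G : ℤ → ℤ → R) (n : ℤ) : ℤ → ℤ → R :=
  fun a b => ∑ᶠ k : ℕ, (zbinom n k : R) * pow2 (hzS G) k (a - n) b

/-- `(G - w)/w` for `G ≡ w (mod z)`. -/
def hwS (G : ℤ → ℤ → R) : ℤ → ℤ → R := fun i j => G i (j + 1) - oneS2 R i j

/-- Integer powers `i_{w,z} G^n`, for `G ≡ w (mod z)`, expanded in `R((w))⟦z⟧`. -/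
def iwzPow (G : ℤ → ℤ → R) (n : ℤ) : ℤ → ℤ → R :=
  fun a b => ∑ᶠ k : ℕ, (zbinom n k : R) * pow2 (hwS G) k a (b - n)

/-- `(G + w)/(-w)` for `G ≡ ι(w) (mod z)`. -/
def hwNegS (G : ℤ → ℤ → R) : ℤ → ℤ → R := fun i j => -G i (j + 1) - oneS2 R i j

/-- Integer powers `i_{w,z} G^n`, for `G ≡ -w(1+⋯) (mod z)` (e.g. `G = F(z, ι w)`),
expanded in `R((w))⟦z⟧`. -/
def iwzPowNeg (G : ℤ → ℤ → R) (n : ℤ) : ℤ → ℤ → R :=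
  fun a b => (msign n : R) * ∑ᶠ k : ℕ, (zbinom n k : R) * pow2 (hwNegS G) k a (b - n)

/-- `(f + z)/(-z)` for a series `f = -z(1 + ⋯)` such as `ι(z)`. -/
def hS (f : ℤ → R) : ℤ → R := fun j => -f (j + 1) - oneS R j

/-- Integer powers `f(z)^n` (`n : ℤ`) for `f = -z(1+⋯)`, e.g. `f = ι(z)`. -/
def iotaPow (f : ℤ → R) (n : ℤ) : ℤ → R :=
  fun a => (msign n : R) * ∑ᶠ k : ℕ, (zbinom n k : R) * pow1 (hS f) k (a - n)

/-- `f - 1` for a power series with constant term `1`. -/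
def hOneS (f : ℤ → R) : ℤ → R := fun j => f j - oneS R j

/-- Multiplicative inverse of a power series with constant term `1`. -/
def invOne (f : ℤ → R) : ℤ → R :=
  fun a => ∑ᶠ k : ℕ, ((-1 : R) ^ k) * pow1 (hOneS f) k a

end Series

/-- A (one-dimensional, commutative) formal group law `F(z,w)` over `R`, together with
its (unique) inverse `ι`. -/
structure FormalGroupLaw (R : Type*) [CommRing R] where
  F : ℤ → ℤ → R
  F_supp : ∀ i j : ℤ, i < 0 ∨ j < 0 → F i j = 0
  /-- `F(z,0) = z`, so that `F(z,w) = z + w + O(zw)` using commutativity. -/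
  F_modw : ∀ i : ℤ, F i 0 = if i = 1 then 1 else 0
  F_comm : ∀ i j : ℤ, F i j = F j i
  /-- associativity `F(F(z,w),v) = F(z,F(w,v))`, coefficient-wise. -/
  F_assoc : ∀ a b c : ℤ,
    (∑ᶠ m : ℕ, F (m : ℤ) c * pow2 F m a b) = ∑ᶠ n : ℕ, F a (n : ℤ) * pow2 F n b c
  /-- the inverse `ι(z) = -z + O(z²)`. -/
  inv : ℤ → R
  inv_supp : ∀ n : ℤ, n < 1 → inv n = 0
  inv_one : inv 1 = -1
  /-- `F(z, ι(z)) = 0`, coefficient-wise. -/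
  inv_eq : ∀ n : ℤ, (∑ᶠ p : ℤ × ℕ, F p.1 (p.2 : ℤ) * pow1 inv p.2 (n - p.1)) = 0

namespace FormalGroupLaw

variable {R : Type*} [CommRing R] {M : Type*} [AddCommGroup M] [Module R M]

/-- The series `F(z, ι(w))`. -/
def Fzi (𝓕 : FormalGroupLaw R) : ℤ → ℤ → R :=
  fun i j => ∑ᶠ m : ℕ, 𝓕.F i (m : ℤ) * pow1 𝓕.inv m j

/-- The `F`-delta distribution `z⁻¹δ_F(w/z) = i_{z,w}F(z,ιw)⁻¹ - i_{w,z}F(z,ιw)⁻¹`. -/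
def delta (𝓕 : FormalGroupLaw R) : ℤ → ℤ → R :=
  fun a b => izwPow 𝓕.Fzi (-1) a b - iwzPowNeg 𝓕.Fzi (-1) a b

/-- `p_F(z) = F^{0,1}(z,0)⁻¹`, the coefficient series of the invariant 1-form. -/
def pF (𝓕 : FormalGroupLaw R) : ℤ → R := invOne (fun i => 𝓕.F i 1)

/-- `F`-residue: the coefficient of `z⁻¹` in `f(z)·p_F(z)`. -/
def resF (𝓕 : FormalGroupLaw R) (f : ℤ → M) : M := ∑ᶠ i : ℤ, 𝓕.pF i • f (-1 - i)

/-- The `F`-hyperderivative `𝒮^F_n f`, defined by `i_{z,w}f(F(z,w)) = ∑_n (𝒮^F_n f)(z) wⁿ`. -/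
def hyper (𝓕 : FormalGroupLaw R) (n : ℕ) (f : ℤ → R) : ℤ → R :=
  fun a => ∑ᶠ m : ℤ, f m * izwPow 𝓕.F m a (n : ℤ)

/-- `F`-binomial coefficients: `i_{z,w}F(z,w)^n = ∑_{i,j} binomF(n;i,j) z^i w^j`. -/
def binomF (𝓕 : FormalGroupLaw R) (n i j : ℤ) : R := izwPow 𝓕.F n i j

/-- `φ` is a logarithm of `F`: `φ(F(z,w)) = φ(z) + φ(w)`, `φ(0) = 0`, `φ'(0) = 1`. -/
def IsLogarithm (𝓕 : FormalGroupLaw R) (φ : ℤ → R) : Prop :=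
  (∀ n : ℤ, n < 0 → φ n = 0) ∧ φ 0 = 0 ∧ φ 1 = 1 ∧
  ∀ a b : ℤ, (∑ᶠ m : ℕ, φ (m : ℤ) * pow2 𝓕.F m a b)
    = (if b = 0 then φ a else 0) + (if a = 0 then φ b else 0)

end FormalGroupLaw

section Vertex

variable {R : Type*} [CommRing R] {V : Type*} [AddCommGroup V] [Module R V]

/-- For `c = ∑_m c_m v^m ∈ V((v))`, the substitution `v ↦ F(z,w)` (coefficient `(k,n)` of
`z^k w^n`, expanded in `V((z))⟦w⟧`). -/
def substF (𝓕 : FormalGroupLaw R) (c : ℤ → V) : ℤ → ℤ → V :=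
  fun k n => ∑ᶠ m : ℤ, izwPow 𝓕.F m k n • c m

/-- Coefficients of `i_{z,w} Y(a, F(z,w)) (Y(b,w)c)`, where `Ya v = Y(a,·)v` and
`d = Y(b,·)c`. -/
def substFProd (𝓕 : FormalGroupLaw R) (Ya : V → ℤ → V) (d : ℤ → V) : ℤ → ℤ → V :=
  fun k n => ∑ᶠ q : ℤ × ℤ, izwPow 𝓕.F q.1 k (n - q.2) • Ya (d q.2) q.1

end Vertex

/-- A vertex `F`-algebra `(V, 𝟙, 𝒮, Y)` over the formal group law `𝓕`.
`Y a b : ℤ → V` records the coefficients of `Y(a,z)b = ∑_k (Y a b k) z^k`, and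
`S n` is the component `𝒮⁽ⁿ⁾` of the `F`-shift operator `𝒮(z) = ∑_{n≥0} 𝒮⁽ⁿ⁾ zⁿ`. -/
structure VertexFAlgebra (R : Type*) [CommRing R] (𝓕 : FormalGroupLaw R)
    (V : Type*) [AddCommGroup V] [Module R V] where
  vac : V
  S : ℕ → V →ₗ[R] V
  Y : V →ₗ[R] V →ₗ[R] (ℤ → V)
  /-- `Y(a,z)b ∈ V((z))`. -/
  Y_laurent : ∀ a b : V, IsLaurent (Y a b)
  /-- `Y(a,z)𝟙` is holomorphic. -/
  vac_holo : ∀ (a : V) (k : ℤ), k < 0 → Y a vac k = 0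
  /-- `Y(a,z)𝟙|_{z=0} = a`. -/
  creation : ∀ a : V, Y a vac 0 = a
  /-- `Y(𝟙,z) = id`. -/
  Y_vac : ∀ (b : V) (k : ℤ), Y vac b k = if k = 0 then b else 0
  /-- `𝒮(0) = id`. -/
  S_zero : S 0 = LinearMap.id
  /-- `𝒮(z)𝟙 = 𝟙`. -/
  S_vac : ∀ n : ℕ, 1 ≤ n → S n vac = 0
  /-- `𝒮(z) ∘ 𝒮(w) = 𝒮(F(z,w))`, coefficient-wise. -/
  S_comp : ∀ (a : V) (i j : ℕ),
    S i (S j a) = ∑ᶠ m : ℕ, pow2 𝓕.F m (i : ℤ) (j : ℤ) • S m a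
  /-- `F`-translation covariance `Y(𝒮(w)a, z)b = i_{z,w} Y(a,F(z,w))b`. -/
  translation : ∀ (a b : V) (k : ℤ) (n : ℕ),
    Y (S n a) b k = substF 𝓕 (Y a b) k (n : ℤ)
  /-- weak `F`-associativity. -/
  weak_assoc : ∀ a b c : V, ∃ N : ℕ,
    mulS2 (pow2 𝓕.F N) (fun k l => Y (Y a b k) c l)
      = mulS2 (pow2 𝓕.F N) (substFProd 𝓕 (fun v => Y a v) (Y b c))
  /-- skew symmetry `Y(a,z)b = 𝒮(z)(Y(b,ι(z))a)`, coefficient-wise. -/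
  skew : ∀ (a b : V) (k : ℤ),
    Y a b k = ∑ᶠ q : ℕ × ℤ, iotaPow 𝓕.inv q.2 (k - (q.1 : ℤ)) • S q.1 (Y b a q.2)

end

namespace GAux
open Finset PowerSeries

noncomputable section

variable {M : Type*} [AddCommMonoid M]

def natEmb : ℕ ↪ ℤ := ⟨((↑) : ℕ → ℤ), fun a b h => Int.natCast_inj.mp h⟩

lemma fz (f : ℤ → M) (N : ℕ) (h : ∀ i : ℤ, f i ≠ 0 → 0 ≤ i ∧ i < N) :
    ∑ᶠ i : ℤ, f i = ∑ k ∈ Finset.range N, f (k : ℤ) := by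
  rw [finsum_eq_sum_of_support_subset f (s := (Finset.range N).map natEmb)]
  · rw [Finset.sum_map]; rfl
  · intro i hi
    rcases h i hi with ⟨h0, h1⟩
    simp only [Finset.coe_map, Set.mem_image, Finset.mem_coe, Finset.mem_range]
    exact ⟨i.toNat, by omega, by show ((i.toNat : ℕ) : ℤ) = i; omega⟩

lemma fn (f : ℕ → M) (N : ℕ) (h : ∀ i : ℕ, f i ≠ 0 → i < N) :
    ∑ᶠ i : ℕ, f i = ∑ k ∈ Finset.range N, f k := by
  rw [finsum_eq_sum_of_support_subset f (s := Finset.range N)]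
  intro i hi; simpa using h i hi

lemma finite2 (f : ℤ × ℤ → M) (N : ℕ)
    (h : ∀ p : ℤ × ℤ, f p ≠ 0 → (0 ≤ p.1 ∧ p.1 < N) ∧ (0 ≤ p.2 ∧ p.2 < N)) :
    (Function.support f).Finite := by
  apply Set.Finite.subset (Set.finite_Icc ((0 : ℤ), (0 : ℤ)) ((N : ℤ), (N : ℤ)))
  intro p hp
  rcases h p hp with ⟨⟨_, _⟩, _, _⟩
  simp [Prod.le_def]; omega

lemma fzz (f : ℤ → ℤ → M) (N N' : ℕ)
    (h : ∀ p q : ℤ, f p q ≠ 0 → (0 ≤ p ∧ p < N) ∧ (0 ≤ q ∧ q < N')) :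
    ∑ᶠ p : ℤ × ℤ, f p.1 p.2 = ∑ i ∈ Finset.range N, ∑ j ∈ Finset.range N', f (i : ℤ) (j : ℤ) := by
  have hfin : (Function.support fun p : ℤ × ℤ => f p.1 p.2).Finite := by
    apply finite2 _ (max N N')
    intro p hp
    rcases h p.1 p.2 hp with ⟨⟨a, b⟩, c, d⟩
    refine ⟨⟨a, ?_⟩, c, ?_⟩ <;> [skip; skip] <;>
      · have := le_max_left N N'; have := le_max_right N N'; omega
  rw [finsum_curry _ hfin]
  rw [fz (fun a => ∑ᶠ b : ℤ, f a b) N]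
  · exact Finset.sum_congr rfl fun i _ => fz _ N' (fun j hj => (h _ _ hj).2)
  · intro i hi
    have : ∃ j, f i j ≠ 0 := by
      by_contra hc; push_neg at hc; exact hi (finsum_eq_zero_of_forall_eq_zero hc)
    rcases this with ⟨j, hj⟩
    exact (h i j hj).1

lemma fzn (f : ℤ → ℕ → M) (N : ℕ)
    (h : ∀ (p : ℤ) (q : ℕ), f p q ≠ 0 → (0 ≤ p ∧ p < N) ∧ q < N) :
    ∑ᶠ p : ℤ × ℕ, f p.1 p.2 = ∑ i ∈ Finset.range N, ∑ j ∈ Finset.range N, f (i : ℤ) j := by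
  have hfin : (Function.support fun p : ℤ × ℕ => f p.1 p.2).Finite := by
    apply Set.Finite.subset (Set.finite_Icc ((0 : ℤ), (0 : ℕ)) ((N : ℤ), N))
    intro p hp
    rcases h p.1 p.2 hp with ⟨⟨a, b⟩, c⟩
    simp [Prod.le_def]; omega
  rw [finsum_curry _ hfin]
  rw [fz (fun a => ∑ᶠ b : ℕ, f a b) N]
  · exact Finset.sum_congr rfl fun i _ => fn _ N (fun j hj => (h _ _ hj).2)
  · intro i hi
    have : ∃ j, f i j ≠ 0 := by
      by_contra hc; push_neg at hc; exact hi (finsum_eq_zero_of_forall_eq_zero hc)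
    rcases this with ⟨j, hj⟩
    exact (h i j hj).1

lemma int_to_nat_sum (f : ℤ → M) (N : ℕ) (h : ∀ i : ℤ, f i ≠ 0 → 0 ≤ i ∧ i < N) :
    ∑ᶠ i : ℤ, f i = ∑ᶠ m : ℕ, f (m : ℤ) := by
  rw [fz f N h, fn (fun m => f (m : ℤ)) N (fun i hi => by have := h i hi; omega)]

variable {R : Type*} [CommRing R]

/-- power-series support -/
def PS1 (f : ℤ → R) : Prop := ∀ n : ℤ, n < 0 → f n = 0

def PS2 (f : ℤ → ℤ → R) : Prop := ∀ i j : ℤ, i < 0 ∨ j < 0 → f i j = 0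

def toP (f : ℤ → R) : PowerSeries R := PowerSeries.mk fun n => f (n : ℤ)

@[simp] lemma toP_coeff (f : ℤ → R) (n : ℕ) : coeff n (toP f) = f n := coeff_mk _ _

lemma ps1_ext {f g : ℤ → R} (hf : PS1 f) (hg : PS1 g) (h : toP f = toP g) : f = g := by
  funext n
  rcases lt_or_ge n 0 with hn | hn
  · rw [hf n hn, hg n hn]
  · have := congrArg (coeff n.toNat) h
    simpa [Int.toNat_of_nonneg hn] using this

lemma ps1_mulS {f g : ℤ → R} (hf : PS1 f) (hg : PS1 g) : PS1 (mulS f g) := by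
  intro n hn
  apply finsum_eq_zero_of_forall_eq_zero
  intro i
  rcases lt_or_ge i 0 with hi | hi
  · rw [hf i hi, zero_smul]
  · rw [hg (n - i) (by omega), smul_zero]

lemma mulS_coeff {f g : ℤ → R} (hf : PS1 f) (hg : PS1 g) (n : ℕ) :
    mulS f g (n : ℤ) = coeff n (toP f * toP g) := by
  rw [coeff_mul, Finset.Nat.sum_antidiagonal_eq_sum_range_succ_mk]
  unfold mulS
  rw [fz _ (n + 1)]
  · refine Finset.sum_congr rfl fun k hk => ?_
    rw [Finset.mem_range] at hk
    rw [smul_eq_mul, toP_coeff, toP_coeff]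
    congr 1
    congr 1
    omega
  · intro i hi
    constructor
    · by_contra hc; exact hi (by rw [hf i (by omega), zero_smul])
    · by_contra hc; exact hi (by rw [hg (n - i) (by omega), smul_zero])

lemma toP_mulS {f g : ℤ → R} (hf : PS1 f) (hg : PS1 g) :
    toP (mulS f g) = toP f * toP g := by
  apply PowerSeries.ext; intro n
  rw [toP_coeff, mulS_coeff hf hg]

lemma ps1_oneS : PS1 (oneS R) := by intro n hn; simp [oneS]; omega

lemma toP_oneS : toP (oneS R) = 1 := by
  apply PowerSeries.ext; intro n
  rw [toP_coeff]
  rcases eq_or_ne n 0 with rfl | h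
  · simp [oneS]
  · simp [oneS, coeff_one, h, Int.natCast_eq_zero]

lemma ps1_pow1 {f : ℤ → R} (hf : PS1 f) (k : ℕ) : PS1 (pow1 f k) := by
  induction k with
  | zero => exact ps1_oneS
  | succ k ih => exact ps1_mulS hf ih

lemma toP_pow1 {f : ℤ → R} (hf : PS1 f) (k : ℕ) : toP (pow1 f k) = toP f ^ k := by
  induction k with
  | zero => exact toP_oneS
  | succ k ih =>
    show toP (mulS f (pow1 f k)) = _
    rw [toP_mulS hf (ps1_pow1 hf k), ih, pow_succ, mul_comm]

lemma pow1_supp {f : ℤ → R} (hf : PS1 f) (h0 : f 0 = 0) (k : ℕ) :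
    ∀ n : ℤ, n < k → pow1 f k n = 0 := by
  induction k with
  | zero => intro n hn; exact ps1_oneS n (by exact_mod_cast hn)
  | succ k ih =>
    intro n hn
    apply finsum_eq_zero_of_forall_eq_zero
    intro i
    rcases lt_or_ge i 0 with hi | hi
    · rw [hf i hi, zero_smul]
    rcases eq_or_ne i 0 with rfl | hi0
    · rw [h0, zero_smul]
    · rw [ih (n - i) (by push_cast; omega), smul_zero]

lemma mulS_comm {f g : ℤ → R} (hf : PS1 f) (hg : PS1 g) : mulS f g = mulS g f := by
  apply ps1_ext (ps1_mulS hf hg) (ps1_mulS hg hf)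
  rw [toP_mulS hf hg, toP_mulS hg hf, mul_comm]

lemma mulS_assoc {f g h : ℤ → R} (hf : PS1 f) (hg : PS1 g) (hh : PS1 h) :
    mulS (mulS f g) h = mulS f (mulS g h) := by
  apply ps1_ext (ps1_mulS (ps1_mulS hf hg) hh) (ps1_mulS hf (ps1_mulS hg hh))
  rw [toP_mulS (ps1_mulS hf hg) hh, toP_mulS hf (ps1_mulS hg hh), toP_mulS hf hg,
    toP_mulS hg hh, mul_assoc]

lemma mulS_one {f : ℤ → R} (hf : PS1 f) : mulS f (oneS R) = f := by
  apply ps1_ext (ps1_mulS hf ps1_oneS) hf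
  rw [toP_mulS hf ps1_oneS, toP_oneS, mul_one]

lemma one_mulS {f : ℤ → R} (hf : PS1 f) : mulS (oneS R) f = f := by
  rw [mulS_comm ps1_oneS hf]; exact mulS_one hf

lemma zero_mulS (g : ℤ → R) : mulS (0 : ℤ → R) g = 0 := by
  funext n; apply finsum_eq_zero_of_forall_eq_zero; intro i; simp

lemma mulS_zero (f : ℤ → R) : mulS f (0 : ℤ → R) = 0 := by
  funext n; apply finsum_eq_zero_of_forall_eq_zero; intro i; simp [mulS]

end
end GAux


namespace GAux
section Two
open Finset PowerSeries
variable {R : Type*} [CommRing R]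

noncomputable section

abbrev PP (R : Type*) [CommRing R] := PowerSeries (PowerSeries R)

def toP2 (f : ℤ → ℤ → R) : PP R := PowerSeries.mk fun i => PowerSeries.mk fun j => f i j

@[simp] lemma toP2_coeff (f : ℤ → ℤ → R) (i j : ℕ) :
    coeff j (coeff i (toP2 f)) = f i j := by
  simp [toP2]

lemma ps2_ext {f g : ℤ → ℤ → R} (hf : PS2 f) (hg : PS2 g) (h : toP2 f = toP2 g) : f = g := by
  funext i j
  rcases lt_or_ge i 0 with hi | hi
  · rw [hf i j (Or.inl hi), hg i j (Or.inl hi)]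
  rcases lt_or_ge j 0 with hj | hj
  · rw [hf i j (Or.inr hj), hg i j (Or.inr hj)]
  have := congrArg (fun Φ => coeff j.toNat (coeff i.toNat Φ)) h
  simpa [Int.toNat_of_nonneg hi, Int.toNat_of_nonneg hj] using this

lemma ps2_mulS2 {f g : ℤ → ℤ → R} (hf : PS2 f) (hg : PS2 g) : PS2 (mulS2 f g) := by
  intro a b hab
  apply finsum_eq_zero_of_forall_eq_zero
  rintro ⟨p, q⟩
  rcases lt_or_ge p 0 with hp | hp
  · rw [hf p q (Or.inl hp), zero_smul]
  rcases lt_or_ge q 0 with hq | hq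
  · rw [hf p q (Or.inr hq), zero_smul]
  · rw [hg (a - p) (b - q) (by omega), smul_zero]

lemma mulS2_range {f g : ℤ → ℤ → R} (hf : PS2 f) (hg : PS2 g) {a b : ℤ} {N N' : ℕ}
    (ha : 0 ≤ a) (haN : a < N) (hb : 0 ≤ b) (hbN : b < N') :
    mulS2 f g a b = ∑ p ∈ range N, ∑ q ∈ range N', f p q * g (a - p) (b - q) := by
  unfold mulS2
  rw [fzz (fun p q => f p q • g (a - p) (b - q)) N N']
  · exact Finset.sum_congr rfl fun p _ => Finset.sum_congr rfl fun q _ => smul_eq_mul ..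
  · intro p q hpq
    constructor
    · constructor
      · by_contra hc; exact hpq (by rw [hf p q (Or.inl (by omega)), zero_smul])
      · by_contra hc; exact hpq (by rw [hg (a - p) (b - q) (Or.inl (by omega)), smul_zero])
    · constructor
      · by_contra hc; exact hpq (by rw [hf p q (Or.inr (by omega)), zero_smul])
      · by_contra hc; exact hpq (by rw [hg (a - p) (b - q) (Or.inr (by omega)), smul_zero])

lemma coeff2_mul (Φ Ψ : PP R) (a b : ℕ) :
    coeff b (coeff a (Φ * Ψ)) =
      ∑ p ∈ range (a + 1), ∑ q ∈ range (b + 1),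
        coeff q (coeff p Φ) *
          coeff (b - q) (coeff (a - p) Ψ) := by
  rw [coeff_mul, map_sum, Finset.Nat.sum_antidiagonal_eq_sum_range_succ_mk]
  refine Finset.sum_congr rfl fun p _ => ?_
  rw [coeff_mul, Finset.Nat.sum_antidiagonal_eq_sum_range_succ_mk]

lemma mulS2_coeff {f g : ℤ → ℤ → R} (hf : PS2 f) (hg : PS2 g) (a b : ℕ) :
    mulS2 f g (a : ℤ) (b : ℤ) = coeff b (coeff a (toP2 f * toP2 g)) := by
  rw [coeff2_mul, mulS2_range hf hg (by positivity) (by exact_mod_cast Nat.lt_succ_self a)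
      (by positivity) (by exact_mod_cast Nat.lt_succ_self b)]
  refine Finset.sum_congr rfl fun p hp => Finset.sum_congr rfl fun q hq => ?_
  rw [Finset.mem_range] at hp hq
  rw [toP2_coeff, toP2_coeff]
  have e1 : (q : ℤ) = (b : ℤ) - ((b - q : ℕ) : ℤ) := by omega
  have e2 : ((b - q : ℕ) : ℤ) = (b : ℤ) - q := by omega
  have e3 : ((a - p : ℕ) : ℤ) = (a : ℤ) - p := by omega
  rw [e2, e3]

lemma toP2_mulS2 {f g : ℤ → ℤ → R} (hf : PS2 f) (hg : PS2 g) :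
    toP2 (mulS2 f g) = toP2 f * toP2 g := by
  apply PowerSeries.ext; intro a; apply PowerSeries.ext; intro b
  rw [toP2_coeff, mulS2_coeff hf hg]

lemma ps2_oneS2 : PS2 (oneS2 R) := by
  intro i j hij; simp only [oneS2, ite_eq_right_iff]; rintro ⟨rfl, rfl⟩; omega

lemma toP2_oneS2 : toP2 (oneS2 R) = 1 := by
  apply PowerSeries.ext; intro a; apply PowerSeries.ext; intro b
  rw [toP2_coeff]
  rcases eq_or_ne a 0 with rfl | ha
  · rcases eq_or_ne b 0 with rfl | hb
    · simp [oneS2]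
    · simp [oneS2, hb, coeff_one, Int.natCast_eq_zero, PowerSeries.coeff_one]
  · simp [oneS2, ha, coeff_one, Int.natCast_eq_zero, PowerSeries.coeff_one]

lemma ps2_pow2 {f : ℤ → ℤ → R} (hf : PS2 f) (k : ℕ) : PS2 (pow2 f k) := by
  induction k with
  | zero => exact ps2_oneS2
  | succ k ih => exact ps2_mulS2 hf ih

lemma toP2_pow2 {f : ℤ → ℤ → R} (hf : PS2 f) (k : ℕ) : toP2 (pow2 f k) = toP2 f ^ k := by
  induction k with
  | zero => exact toP2_oneS2
  | succ k ih =>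
    show toP2 (mulS2 f (pow2 f k)) = _
    rw [toP2_mulS2 hf (ps2_pow2 hf k), ih, pow_succ, mul_comm]

lemma one_mulS2 {f : ℤ → ℤ → R} (hf : PS2 f) : mulS2 (oneS2 R) f = f := by
  apply ps2_ext (ps2_mulS2 ps2_oneS2 hf) hf
  rw [toP2_mulS2 ps2_oneS2 hf, toP2_oneS2, one_mul]

lemma pow2_supp {f : ℤ → ℤ → R} (hf : PS2 f) (h0 : f 0 0 = 0) (k : ℕ) :
    ∀ a b : ℤ, a + b < k → pow2 f k a b = 0 := by
  induction k with
  | zero =>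
    intro a b hab
    have : a < 0 ∨ b < 0 := by omega
    exact ps2_oneS2 a b this
  | succ k ih =>
    intro a b hab
    apply finsum_eq_zero_of_forall_eq_zero
    rintro ⟨p, q⟩
    rcases lt_or_ge p 0 with hp | hp
    · rw [hf p q (Or.inl hp), zero_smul]
    rcases lt_or_ge q 0 with hq | hq
    · rw [hf p q (Or.inr hq), zero_smul]
    rcases eq_or_ne p 0 with rfl | hp0
    · rcases eq_or_ne q 0 with rfl | hq0
      · rw [h0, zero_smul]
      · rw [ih (a - 0) (b - q) (by push_cast at hab ⊢; omega), smul_zero]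
    · rw [ih (a - p) (b - q) (by push_cast at hab ⊢; omega), smul_zero]

lemma zero_mulS2 (g : ℤ → ℤ → R) : mulS2 (0 : ℤ → ℤ → R) g = 0 := by
  funext a b; apply finsum_eq_zero_of_forall_eq_zero; intro p; simp [mulS2]

lemma mulS2_zero (f : ℤ → ℤ → R) : mulS2 f (0 : ℤ → ℤ → R) = 0 := by
  funext a b; apply finsum_eq_zero_of_forall_eq_zero; intro p; simp [mulS2]

end
end Two
end GAux


namespace GAux
section Sub
open Finset PowerSeries
variable {R : Type*} [CommRing R]

noncomputable section

def pw (σ : ℤ → R) (m : ℤ) : ℤ → R := if 0 ≤ m then pow1 σ m.toNat else 0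

lemma ps1_pw {σ : ℤ → R} (hσ : PS1 σ) (m : ℤ) : PS1 (pw σ m) := by
  unfold pw; split
  · exact ps1_pow1 hσ _
  · intro n _; rfl

lemma pw_natCast (σ : ℤ → R) (q : ℕ) : pw σ (q : ℤ) = pow1 σ q := by
  simp [pw]

lemma pw_supp {σ : ℤ → R} (hσ : PS1 σ) (h0 : σ 0 = 0) {m k : ℤ} (h : pw σ m k ≠ 0) :
    0 ≤ m ∧ 0 ≤ k ∧ m ≤ k := by
  unfold pw at h
  split at h
  case isTrue hm =>
    refine ⟨hm, ?_, ?_⟩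
    · by_contra hc; exact h (ps1_pow1 hσ _ k (by omega))
    · by_contra hc; exact h (pow1_supp hσ h0 m.toNat k (by omega))
  case isFalse => exact absurd rfl h

lemma pw_add {σ : ℤ → R} (hσ : PS1 σ) (q s : ℤ) (hq : 0 ≤ q) (hs : 0 ≤ s) :
    mulS (pw σ q) (pw σ s) = pw σ (q + s) := by
  unfold pw
  rw [if_pos hq, if_pos hs, if_pos (by omega : (0:ℤ) ≤ q + s)]
  apply ps1_ext (ps1_mulS (ps1_pow1 hσ _) (ps1_pow1 hσ _)) (ps1_pow1 hσ _)
  rw [toP_mulS (ps1_pow1 hσ _) (ps1_pow1 hσ _), toP_pow1 hσ, toP_pow1 hσ, toP_pow1 hσ,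
    ← pow_add]
  congr 1
  omega

def sub2 (σ : ℤ → R) (f : ℤ → ℤ → R) : ℤ → R :=
  fun n => ∑ᶠ p : ℤ × ℤ, f p.1 p.2 * pw σ p.2 (n - p.1)

lemma ps1_sub2 {σ : ℤ → R} (hσ : PS1 σ) {f : ℤ → ℤ → R} (hf : PS2 f) : PS1 (sub2 σ f) := by
  intro n hn
  apply finsum_eq_zero_of_forall_eq_zero
  rintro ⟨p, q⟩
  rcases lt_or_ge p 0 with hp | hp
  · rw [hf p q (Or.inl hp), zero_mul]
  · rw [ps1_pw hσ q (n - p) (by omega), mul_zero]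

lemma sub2_range {σ : ℤ → R} (hσ : PS1 σ) (hσ0 : σ 0 = 0) {f : ℤ → ℤ → R} (hf : PS2 f)
    (n : ℤ) (N : ℕ) (hN : n < N) :
    sub2 σ f n = ∑ p ∈ range N, ∑ q ∈ range N, f p q * pw σ q (n - p) := by
  unfold sub2
  refine fzz (fun p q => f p q * pw σ q (n - p)) N N ?_
  intro p q h
  have h' : f p q * pw σ q (n - p) ≠ 0 := h
  have h1 : f p q ≠ 0 := fun hc => h' (by rw [hc, zero_mul])
  have h2 : pw σ q (n - p) ≠ 0 := fun hc => h' (by rw [hc, mul_zero])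
  have h3 : 0 ≤ p := by by_contra hc; exact h1 (hf p q (Or.inl (by omega)))
  have h4 := pw_supp hσ hσ0 h2
  exact ⟨⟨h3, by omega⟩, h4.1, by omega⟩

lemma mulS_range {f g : ℤ → R} (hf : PS1 f) (hg : PS1 g) (n : ℤ) (N : ℕ) (hN : n < N) :
    mulS f g n = ∑ i ∈ range N, f i * g (n - i) := by
  unfold mulS
  rw [fz _ N]
  · exact Finset.sum_congr rfl fun k _ => smul_eq_mul ..
  · intro i h
    have h1 : f i ≠ 0 := fun hc => h (by rw [hc, zero_smul])
    have h2 : g (n - i) ≠ 0 := fun hc => h (by rw [hc, smul_zero])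
    have h3 : 0 ≤ i := by by_contra hc; exact h1 (hf i (by omega))
    have h4 : 0 ≤ n - i := by by_contra hc; exact h2 (hg _ (by omega))
    exact ⟨h3, by omega⟩

lemma conv_pw {σ : ℤ → R} (hσ : PS1 σ) (hσ0 : σ 0 = 0) (p q r s n : ℤ) (N : ℕ)
    (hp : 0 ≤ p) (hq : 0 ≤ q) (hr : 0 ≤ r) (hs : 0 ≤ s) (hN : n < N) :
    ∑ i ∈ Finset.range N, pw σ q ((i : ℤ) - p) * pw σ s (n - i - r)
      = pw σ (q + s) (n - p - r) := by
  rw [← pw_add hσ q s hq hs]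
  show _ = mulS (pw σ q) (pw σ s) (n - p - r)
  unfold mulS
  rw [← finsum_comp_equiv (Equiv.subRight p)
    (f := fun t => pw σ q t • pw σ s (n - p - r - t))]
  simp only [Equiv.subRight_apply]
  rw [fz _ N]
  · refine (Finset.sum_congr rfl fun k _ => ?_).symm
    have e : n - p - r - ((k : ℤ) - p) = n - k - r := by ring
    rw [e, smul_eq_mul]
  · intro i h
    have h1 : pw σ q (i - p) ≠ 0 := fun hc => h (by rw [hc, zero_smul])
    have h2 : pw σ s (n - p - r - (i - p)) ≠ 0 := fun hc => h (by rw [hc, smul_zero])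
    have h3 := pw_supp hσ hσ0 h1
    have h4 := pw_supp hσ hσ0 h2
    constructor <;> omega

lemma shift_range {M : Type*} [AddCommMonoid M] (h : ℤ → M) (p : ℤ) (hp : 0 ≤ p) (N : ℕ)
    (hlow : ∀ a : ℤ, h a ≠ 0 → p ≤ a) (hhigh : ∀ a : ℤ, (N : ℤ) ≤ a → h a = 0) :
    ∑ k ∈ range N, h (k : ℤ) = ∑ k ∈ range N, h (p + (k : ℤ)) := by
  have key : ∑ k ∈ range N, h (k : ℤ) = ∑ k ∈ Finset.Ico p.toNat N, h (k : ℤ) := by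
    apply (Finset.sum_subset ?_ ?_).symm
    · intro x hx; rw [Finset.mem_Ico] at hx; rw [Finset.mem_range]; omega
    · intro x hx hnx
      rw [Finset.mem_range] at hx
      rw [Finset.mem_Ico] at hnx
      by_contra hc
      have := hlow x hc
      omega
  rw [key, Finset.sum_Ico_eq_sum_range]
  have e1 : ∀ k : ℕ, h ((p.toNat + k : ℕ) : ℤ) = h (p + (k : ℤ)) := by
    intro k; congr 1; omega
  rw [Finset.sum_congr rfl fun k _ => e1 k]
  apply Finset.sum_subset
  · intro x hx; rw [Finset.mem_range] at hx ⊢; omega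
  · intro x hx hnx
    rw [Finset.mem_range] at hx hnx
    apply hhigh
    omega

lemma rot3 {M : Type*} [AddCommMonoid M] {s t u : Finset ℕ} (Y : ℕ → ℕ → ℕ → M) :
    (∑ x ∈ s, ∑ p ∈ t, ∑ q ∈ u, Y x p q)
      = ∑ p ∈ t, ∑ q ∈ u, ∑ x ∈ s, Y x p q :=
  (Finset.sum_comm).trans (Finset.sum_congr rfl fun _ _ => Finset.sum_comm)

lemma rot5 {M : Type*} [AddCommMonoid M] {s t u v w : Finset ℕ} (T : ℕ → ℕ → ℕ → ℕ → ℕ → M) :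
    (∑ i ∈ s, ∑ p ∈ t, ∑ q ∈ u, ∑ r ∈ v, ∑ j ∈ w, T i p q r j)
      = ∑ p ∈ t, ∑ q ∈ u, ∑ r ∈ v, ∑ j ∈ w, ∑ i ∈ s, T i p q r j := by
  refine (Finset.sum_comm).trans (Finset.sum_congr rfl fun p _ => ?_)
  refine (Finset.sum_comm).trans (Finset.sum_congr rfl fun q _ => ?_)
  refine (Finset.sum_comm).trans (Finset.sum_congr rfl fun r _ => ?_)
  exact Finset.sum_comm

lemma sum_swap4 {M : Type*} [AddCommMonoid M] (N : ℕ) (X : ℕ → ℕ → ℕ → ℕ → M) :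
    (∑ a ∈ range N, ∑ b ∈ range N, ∑ p ∈ range N, ∑ q ∈ range N, X a b p q)
      = ∑ p ∈ range N, ∑ q ∈ range N, ∑ a ∈ range N, ∑ b ∈ range N, X a b p q :=
  (Finset.sum_congr rfl fun a _ => rot3 (fun b p q => X a b p q)).trans
    (rot3 (fun a p q => ∑ b ∈ range N, X a b p q))

lemma sub2_mul {σ : ℤ → R} (hσ : PS1 σ) (hσ0 : σ 0 = 0) {f g : ℤ → ℤ → R}
    (hf : PS2 f) (hg : PS2 g) :
    sub2 σ (mulS2 f g) = mulS (sub2 σ f) (sub2 σ g) := by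
  funext n
  rcases lt_or_ge n 0 with hn | hn
  · rw [ps1_sub2 hσ (ps2_mulS2 hf hg) n hn,
      ps1_mulS (ps1_sub2 hσ hf) (ps1_sub2 hσ hg) n hn]
  set N := n.toNat + 1 with hNdef
  have hN : n < (N : ℤ) := by omega
  -- common target
  have target :
      ∑ p ∈ range N, ∑ q ∈ range N, ∑ r ∈ range N, ∑ s ∈ range N,
        f p q * g r s * pw σ ((q : ℤ) + s) (n - p - r) =
      ∑ p ∈ range N, ∑ q ∈ range N, ∑ r ∈ range N, ∑ s ∈ range N,
        f p q * g r s * pw σ ((q : ℤ) + s) (n - p - r) := rfl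
  -- LHS
  have hL : sub2 σ (mulS2 f g) n =
      ∑ p ∈ range N, ∑ q ∈ range N, ∑ r ∈ range N, ∑ s ∈ range N,
        f p q * g r s * pw σ ((q : ℤ) + s) (n - p - r) := by
    rw [sub2_range hσ hσ0 (ps2_mulS2 hf hg) n N hN]
    have step1 : ∀ a ∈ range N, ∀ b ∈ range N,
        mulS2 f g (a : ℤ) (b : ℤ) * pw σ (b : ℤ) (n - a) =
        ∑ p ∈ range N, ∑ q ∈ range N,
          f p q * (g ((a : ℤ) - p) ((b : ℤ) - q) * pw σ (b : ℤ) (n - a)) := by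
      intro a ha b hb
      rw [Finset.mem_range] at ha hb
      rw [mulS2_range hf hg (by positivity) (by exact_mod_cast ha) (by positivity)
        (by exact_mod_cast hb), Finset.sum_mul]
      refine Finset.sum_congr rfl fun p _ => ?_
      rw [Finset.sum_mul]
      exact Finset.sum_congr rfl fun q _ => by ring
    rw [Finset.sum_congr rfl fun a ha => Finset.sum_congr rfl fun b hb => step1 a ha b hb]
    rw [sum_swap4 N (fun a b p q =>
      f p q * (g ((a : ℤ) - p) ((b : ℤ) - q) * pw σ (b : ℤ) (n - a)))]
    refine Finset.sum_congr rfl fun p hp => Finset.sum_congr rfl fun q hq => ?_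
    rw [Finset.mem_range] at hp hq
    -- shift a by p
    have shifta : ∑ a ∈ range N, ∑ b ∈ range N,
        f p q * (g ((a : ℤ) - p) ((b : ℤ) - q) * pw σ (b : ℤ) (n - a)) =
        ∑ r ∈ range N, ∑ b ∈ range N,
        f p q * (g (r : ℤ) ((b : ℤ) - q) * pw σ (b : ℤ) (n - p - r)) := by
      rw [shift_range (fun a : ℤ => ∑ b ∈ range N,
        f p q * (g (a - p) ((b : ℤ) - q) * pw σ (b : ℤ) (n - a))) p (by positivity) N]
      · refine Finset.sum_congr rfl fun r _ => Finset.sum_congr rfl fun b _ => ?_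
        have e1 : (p : ℤ) + r - p = r := by ring
        have e2 : n - ((p : ℤ) + r) = n - p - r := by ring
        rw [e1, e2]
      · intro a ha
        by_contra hc
        apply ha
        apply Finset.sum_eq_zero
        intro b _
        rw [hg (a - p) _ (Or.inl (by omega)), zero_mul, mul_zero]
      · intro a ha
        apply Finset.sum_eq_zero
        intro b _
        rw [ps1_pw hσ _ (n - a) (by omega), mul_zero, mul_zero]
    rw [shifta]
    refine Finset.sum_congr rfl fun r hr => ?_
    rw [Finset.mem_range] at hr
    -- shift b by q
    rw [shift_range (fun b : ℤ => f p q * (g (r : ℤ) (b - q) * pw σ b (n - p - r)))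
      q (by positivity) N]
    · refine Finset.sum_congr rfl fun s _ => ?_
      have e1 : (q : ℤ) + s - q = s := by ring
      rw [e1]
      ring
    · intro b hb
      by_contra hc
      exact hb (by rw [hg (r : ℤ) (b - q) (Or.inr (by omega)), zero_mul, mul_zero])
    · intro b hb
      have : pw σ b (n - p - r) = 0 := by
        by_contra hc
        have := pw_supp hσ hσ0 hc
        omega
      rw [this, mul_zero, mul_zero]
  -- RHS
  have hR : mulS (sub2 σ f) (sub2 σ g) n =
      ∑ p ∈ range N, ∑ q ∈ range N, ∑ r ∈ range N, ∑ s ∈ range N,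
        f p q * g r s * pw σ ((q : ℤ) + s) (n - p - r) := by
    rw [mulS_range (ps1_sub2 hσ hf) (ps1_sub2 hσ hg) n N hN]
    have step1 : ∀ i ∈ range N,
        sub2 σ f (i : ℤ) * sub2 σ g (n - i) =
        ∑ p ∈ range N, ∑ q ∈ range N, ∑ r ∈ range N, ∑ s ∈ range N,
          (f p q * pw σ (q : ℤ) ((i : ℤ) - p)) * (g r s * pw σ (s : ℤ) (n - i - r)) := by
      intro i hi
      rw [Finset.mem_range] at hi
      rw [sub2_range hσ hσ0 hf (i : ℤ) N (by exact_mod_cast hi),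
        sub2_range hσ hσ0 hg (n - i) N (by omega)]
      rw [Finset.sum_mul]
      refine Finset.sum_congr rfl fun p _ => ?_
      rw [Finset.sum_mul]
      refine Finset.sum_congr rfl fun q _ => ?_
      rw [Finset.mul_sum]
      refine Finset.sum_congr rfl fun r _ => ?_
      rw [Finset.mul_sum]
    rw [Finset.sum_congr rfl step1]
    -- move i innermost
    rw [rot5 (fun i p q r s =>
      (f p q * pw σ (q : ℤ) ((i : ℤ) - p)) * (g r s * pw σ (s : ℤ) (n - i - r)))]
    refine Finset.sum_congr rfl fun p _ => ?_
    refine Finset.sum_congr rfl fun q hq => ?_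
    refine Finset.sum_congr rfl fun r _ => ?_
    refine Finset.sum_congr rfl fun s hs => ?_
    rw [Finset.mem_range] at hq hs
    have e : ∀ i ∈ range N,
        (f p q * pw σ (q : ℤ) ((i : ℤ) - p)) * (g r s * pw σ (s : ℤ) (n - i - r)) =
        (f p q * g r s) * (pw σ (q : ℤ) ((i : ℤ) - p) * pw σ (s : ℤ) (n - i - r)) := by
      intro i _; ring
    rw [Finset.sum_congr rfl e, ← Finset.mul_sum,
      conv_pw hσ hσ0 p q r s n N (by positivity) (by positivity) (by positivity)
        (by positivity) hN]
  rw [hL, hR]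

end
end Sub
end GAux


namespace GAux
section Dg
open Finset PowerSeries
variable {R : Type*} [CommRing R]

noncomputable section

def dg (f : ℤ → ℤ → R) : ℤ → R := fun n => ∑ᶠ i : ℤ, f i (n - i)

lemma ps1_dg {f : ℤ → ℤ → R} (hf : PS2 f) : PS1 (dg f) := by
  intro n hn
  apply finsum_eq_zero_of_forall_eq_zero
  intro i
  rcases lt_or_ge i 0 with hi | hi
  · exact hf i _ (Or.inl hi)
  · exact hf i _ (Or.inr (by omega))

lemma dg_range {f : ℤ → ℤ → R} (hf : PS2 f) (n : ℤ) (N : ℕ) (hN : n < N) :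
    dg f n = ∑ i ∈ range N, f (i : ℤ) (n - i) := by
  unfold dg
  rw [fz _ N]
  intro i h
  have h1 : ¬ (i < 0) := fun hc => h (hf i _ (Or.inl hc))
  have h2 : ¬ (n - i < 0) := fun hc => h (hf i _ (Or.inr hc))
  omega

def eS (R : Type*) [CommRing R] : ℤ → R := fun n => if n = 1 then 1 else 0

lemma ps1_eS : PS1 (eS R) := by intro n hn; simp only [eS, ite_eq_right_iff]; intro h; omega

lemma eS_zero : (eS R) 0 = 0 := by simp [eS]

lemma toP_eS : toP (eS R) = X := by
  apply PowerSeries.ext; intro n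
  rw [toP_coeff, PowerSeries.coeff_X]
  by_cases h : n = 1
  · simp [eS, h]
  · rw [if_neg h]
    simp only [eS, ite_eq_right_iff]
    intro hc
    exact absurd (by exact_mod_cast hc) h

lemma pow1_eS (q : ℕ) (k : ℤ) : pow1 (eS R) q k = if k = q then 1 else 0 := by
  rcases lt_or_ge k 0 with hk | hk
  · rw [ps1_pow1 ps1_eS q k hk, if_neg (by omega)]
  · have h1 := congrArg (coeff k.toNat) (toP_pow1 (R := R) ps1_eS q)
    rw [toP_coeff, toP_eS, PowerSeries.coeff_X_pow] at h1
    rw [show k = ((k.toNat : ℕ) : ℤ) by omega, h1]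
    by_cases h : k.toNat = q
    · rw [if_pos h, if_pos (by omega)]
    · rw [if_neg h, if_neg (by omega)]

lemma dg_eq_sub2e {f : ℤ → ℤ → R} (hf : PS2 f) : dg f = sub2 (eS R) f := by
  funext n
  rcases lt_or_ge n 0 with hn | hn
  · rw [ps1_dg hf n hn, ps1_sub2 ps1_eS hf n hn]
  set N := n.toNat + 1 with hNdef
  have hN : n < (N : ℤ) := by omega
  rw [dg_range hf n N hN, sub2_range ps1_eS eS_zero hf n N hN]
  refine Finset.sum_congr rfl fun p hp => ?_
  rw [Finset.mem_range] at hp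
  have inner : ∀ q ∈ range N, f (p : ℤ) (q : ℤ) * pw (eS R) (q : ℤ) (n - p) =
      if n - (p : ℤ) = (q : ℤ) then f (p : ℤ) (q : ℤ) else 0 := by
    intro q _
    rw [pw_natCast, pow1_eS, mul_ite, mul_one, mul_zero]
  rw [Finset.sum_congr rfl inner]
  rcases lt_or_ge (n - (p : ℤ)) 0 with hnp | hnp
  · rw [hf (p : ℤ) _ (Or.inr hnp), Finset.sum_eq_zero]
    intro q _; rw [if_neg (by omega)]
  · rw [Finset.sum_eq_single_of_mem (n - (p : ℤ)).toNat]
    · rw [if_pos (by omega)]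
      congr 1
      omega
    · rw [Finset.mem_range]; omega
    · intro q _ hq; rw [if_neg (by omega)]

lemma dg_mul {f g : ℤ → ℤ → R} (hf : PS2 f) (hg : PS2 g) :
    dg (mulS2 f g) = mulS (dg f) (dg g) := by
  rw [dg_eq_sub2e (ps2_mulS2 hf hg), dg_eq_sub2e hf, dg_eq_sub2e hg,
    sub2_mul ps1_eS eS_zero hf hg]

lemma dg_add {f g : ℤ → ℤ → R} (hf : PS2 f) (hg : PS2 g) :
    dg (fun i j => f i j + g i j) = fun n => dg f n + dg g n := by
  funext n
  unfold dg
  rw [finsum_add_distrib]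
  · apply Set.Finite.subset (Set.finite_Icc (0 : ℤ) n)
    intro i hi
    simp only [Function.mem_support] at hi
    have h1 : ¬ (i < 0) := fun hc => hi (hf i _ (Or.inl hc))
    have h2 : ¬ (n - i < 0) := fun hc => hi (hf i _ (Or.inr hc))
    simp only [Set.mem_Icc]; omega
  · apply Set.Finite.subset (Set.finite_Icc (0 : ℤ) n)
    intro i hi
    simp only [Function.mem_support] at hi
    have h1 : ¬ (i < 0) := fun hc => hi (hg i _ (Or.inl hc))
    have h2 : ¬ (n - i < 0) := fun hc => hi (hg i _ (Or.inr hc))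
    simp only [Set.mem_Icc]; omega

lemma ps2_d10 {f : ℤ → ℤ → R} (hf : PS2 f) : PS2 (d10 f) := by
  intro i j hij
  unfold d10
  rcases hij with hi | hj
  · rcases eq_or_ne i (-1) with rfl | hne
    · norm_num
    · rw [hf (i + 1) j (Or.inl (by omega)), mul_zero]
  · rw [hf (i + 1) j (Or.inr hj), mul_zero]

lemma toP2_add (f g : ℤ → ℤ → R) : toP2 (fun i j => f i j + g i j) = toP2 f + toP2 g := by
  apply PowerSeries.ext; intro a; apply PowerSeries.ext; intro b
  simp [toP2]

lemma toP2_d10 (f : ℤ → ℤ → R) : toP2 (d10 f) = derivativeFun (toP2 f) := by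
  apply PowerSeries.ext; intro a; apply PowerSeries.ext; intro b
  rw [toP2_coeff, show derivativeFun (toP2 f) = d⁄dX _ (toP2 f) from rfl, coeff_derivativeFun]
  have hc : ((a : PowerSeries R) + 1) = C ((a : R) + 1) := by
    rw [map_add, map_natCast, map_one]
  rw [hc, coeff_mul_C, toP2_coeff]
  show (((a : ℤ) + 1 : ℤ) : R) * f ((a : ℤ) + 1) (b : ℤ) = f (((a + 1 : ℕ) : ℤ)) (b : ℤ) * ((a : R) + 1)
  push_cast
  ring

lemma d10_mul {f g : ℤ → ℤ → R} (hf : PS2 f) (hg : PS2 g) :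
    d10 (mulS2 f g) = fun i j => mulS2 (d10 f) g i j + mulS2 f (d10 g) i j := by
  apply ps2_ext (ps2_d10 (ps2_mulS2 hf hg))
  · intro i j hij
    show mulS2 (d10 f) g i j + mulS2 f (d10 g) i j = 0
    rw [ps2_mulS2 (ps2_d10 hf) hg i j hij, ps2_mulS2 hf (ps2_d10 hg) i j hij, add_zero]
  rw [toP2_d10, toP2_add, toP2_mulS2 hf hg, derivativeFun_mul,
    toP2_mulS2 (ps2_d10 hf) hg, toP2_mulS2 hf (ps2_d10 hg), toP2_d10, toP2_d10,
    smul_eq_mul, smul_eq_mul]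
  ring

lemma d10_oneS2 : d10 (oneS2 R) = 0 := by
  funext i j
  unfold d10 oneS2
  rcases eq_or_ne i (-1) with rfl | hne
  · norm_num
  · rw [if_neg (by rintro ⟨h, _⟩; omega)]
    simp

end
end Dg
end GAux


namespace GAux
section FGL
open Finset PowerSeries
variable {R : Type*} [CommRing R]

noncomputable section

lemma sub2_zero (σ : ℤ → R) : sub2 σ (0 : ℤ → ℤ → R) = 0 := by
  funext n
  apply finsum_eq_zero_of_forall_eq_zero
  rintro ⟨p, q⟩
  show (0 : ℤ → ℤ → R) p q * _ = 0
  rw [Pi.zero_apply, Pi.zero_apply, zero_mul]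

lemma sub2_add {σ : ℤ → R} (hσ : PS1 σ) (hσ0 : σ 0 = 0) {f g : ℤ → ℤ → R}
    (hf : PS2 f) (hg : PS2 g) :
    sub2 σ (fun i j => f i j + g i j) = fun n => sub2 σ f n + sub2 σ g n := by
  funext n
  unfold sub2
  have hsup : ∀ (h : ℤ → ℤ → R), PS2 h →
      (Function.support fun p : ℤ × ℤ => h p.1 p.2 * pw σ p.2 (n - p.1)).Finite := by
    intro h hh
    apply finite2 _ (n.toNat + 1)
    rintro ⟨p, q⟩ hpq
    simp only [Function.mem_support] at hpq
    have h1 : h p q ≠ 0 := fun hc => hpq (by simpa [hc] using (zero_mul _))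
    have h2 : pw σ q (n - p) ≠ 0 := fun hc => hpq (by simpa [hc] using (mul_zero _))
    have h3 : ¬ (p < 0) := fun hc => h1 (hh p q (Or.inl hc))
    have h4 := pw_supp hσ hσ0 h2
    constructor <;> constructor <;> omega
  have := finsum_add_distrib (hsup f hf) (hsup g hg)
  rw [← this]
  apply finsum_congr
  rintro ⟨p, q⟩
  show (f p q + g p q) * _ = _
  ring

def sw (f : ℤ → ℤ → R) : ℤ → ℤ → R := fun i j => f j i

lemma sw_mulS2 (f g : ℤ → ℤ → R) : sw (mulS2 f g) = mulS2 (sw f) (sw g) := by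
  funext a b
  show mulS2 f g b a = _
  unfold mulS2
  rw [← finsum_comp_equiv (Equiv.prodComm ℤ ℤ)
    (f := fun p : ℤ × ℤ => f p.1 p.2 • g (b - p.1) (a - p.2))]
  rfl

lemma sw_oneS2 : sw (oneS2 R) = oneS2 R := by
  funext a b
  simp only [sw, oneS2]
  by_cases h : a = 0 ∧ b = 0
  · rw [if_pos ⟨h.2, h.1⟩, if_pos h]
  · rw [if_neg (fun hc => h ⟨hc.2, hc.1⟩), if_neg h]

lemma sw_pow2 (f : ℤ → ℤ → R) (k : ℕ) : sw (pow2 f k) = pow2 (sw f) k := by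
  induction k with
  | zero => exact sw_oneS2
  | succ k ih =>
    show sw (mulS2 f (pow2 f k)) = mulS2 (sw f) (pow2 (sw f) k)
    rw [sw_mulS2, ih]

lemma ps2_zmw : PS2 (zmw R) := by
  intro i j hij
  unfold zmw
  rw [if_neg (by rintro ⟨rfl, rfl⟩; omega), if_neg (by rintro ⟨rfl, rfl⟩; omega)]

lemma d10_zmw : d10 (zmw R) = oneS2 R := by
  funext i j
  unfold d10 zmw oneS2
  by_cases h1 : i + 1 = 1 ∧ j = 0
  · obtain ⟨hi, hj⟩ := h1
    have hiz : i = 0 := by omega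
    subst hiz; subst hj
    norm_num
  · rw [if_neg h1]
    by_cases h2 : i + 1 = 0 ∧ j = 1
    · obtain ⟨hi, hj⟩ := h2
      have hiz : i = -1 := by omega
      subst hiz; subst hj
      norm_num
    · rw [if_neg h2, mul_zero, if_neg (by rintro ⟨rfl, rfl⟩; exact h1 ⟨rfl, rfl⟩)]

lemma dg_zmw : dg (zmw R) = 0 := by
  funext n
  show (∑ᶠ i : ℤ, zmw R i (n - i)) = 0
  rw [finsum_eq_sum_of_support_subset _ (s := ({0, 1} : Finset ℤ))]
  · rw [Finset.sum_pair (by norm_num : (0 : ℤ) ≠ 1)]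
    unfold zmw
    rcases eq_or_ne n 1 with rfl | hn
    · norm_num
    · rw [if_neg (by rintro ⟨h, _⟩; omega), if_neg (by rintro ⟨_, h⟩; omega),
        if_neg (by rintro ⟨h, h'⟩; exact hn (by omega)), if_neg (by rintro ⟨_, h⟩; omega)]
      norm_num
  · intro i hi
    simp only [Function.mem_support] at hi
    unfold zmw at hi
    simp only [Finset.coe_insert, Finset.coe_singleton, Set.mem_insert_iff,
      Set.mem_singleton_iff]
    by_contra hc
    push_neg at hc
    exact hi (by rw [if_neg (by rintro ⟨h, _⟩; exact hc.2 h),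
      if_neg (by rintro ⟨h, _⟩; exact hc.1 h)])

lemma dg_oneS2 : dg (oneS2 R) = oneS R := by
  funext n
  show (∑ᶠ i : ℤ, oneS2 R i (n - i)) = oneS R n
  rw [finsum_eq_single _ 0]
  · unfold oneS2 oneS
    rcases eq_or_ne n 0 with rfl | hn
    · norm_num
    · rw [if_neg (by rintro ⟨_, h⟩; omega), if_neg hn]
  · intro i hi
    unfold oneS2
    rw [if_neg (by rintro ⟨h, _⟩; exact hi h)]

lemma mulS2_zmw (G : ℤ → ℤ → R) (a b : ℤ) :
    mulS2 (zmw R) G a b = G (a - 1) b - G a (b - 1) := by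
  unfold mulS2
  rw [finsum_eq_sum_of_support_subset _ (s := ({((1 : ℤ), (0 : ℤ)), ((0 : ℤ), (1 : ℤ))} :
    Finset (ℤ × ℤ)))]
  · rw [Finset.sum_pair (by norm_num : ((1 : ℤ), (0 : ℤ)) ≠ ((0 : ℤ), (1 : ℤ)))]
    show zmw R 1 0 • G (a - 1) (b - 0) + zmw R 0 1 • G (a - 0) (b - 1) = _
    unfold zmw
    rw [if_pos ⟨rfl, rfl⟩, if_neg (by rintro ⟨h, _⟩; omega), if_pos ⟨rfl, rfl⟩]
    rw [sub_zero, sub_zero, one_smul]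
    rw [show (-1 : R) • G a (b - 1) = -G a (b - 1) by rw [smul_eq_mul]; ring]
    ring
  · rintro ⟨p, q⟩ hpq
    simp only [Function.mem_support] at hpq
    have : zmw R p q ≠ 0 := fun hc => hpq (by rw [hc, zero_smul])
    unfold zmw at this
    simp only [Finset.coe_insert, Finset.coe_singleton, Set.mem_insert_iff,
      Set.mem_singleton_iff, Prod.mk.injEq]
    by_contra hc
    push_neg at hc
    apply this
    rw [if_neg, if_neg]
    · intro ⟨h1, h2⟩
      exact (hc.2 h1) h2
    · intro ⟨h1, h2⟩
      exact (hc.1 h1) h2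

variable (𝓕 : FormalGroupLaw R)

lemma ps2_F : PS2 𝓕.F := 𝓕.F_supp

lemma F00 : 𝓕.F 0 0 = 0 := by have := 𝓕.F_modw 0; simpa using this

lemma F10 : 𝓕.F 1 0 = 1 := by have := 𝓕.F_modw 1; simpa using this

lemma Fi0 (i : ℤ) : 𝓕.F i 0 = if i = 1 then 1 else 0 := 𝓕.F_modw i

lemma ps1_inv : PS1 𝓕.inv := fun n hn => 𝓕.inv_supp n (by omega)

lemma inv0 : 𝓕.inv 0 = 0 := 𝓕.inv_supp 0 (by omega)

lemma sw_F : sw 𝓕.F = 𝓕.F := by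
  funext i j
  exact 𝓕.F_comm j i

lemma ps2_Fzi : PS2 𝓕.Fzi := by
  intro i j hij
  apply finsum_eq_zero_of_forall_eq_zero
  intro m
  rcases hij with hi | hj
  · rw [𝓕.F_supp i m (Or.inl hi), zero_mul]
  · rw [ps1_pow1 (ps1_inv 𝓕) m j hj, mul_zero]

lemma Fzi_range (i j : ℤ) (N : ℕ) (hN : j < N) :
    𝓕.Fzi i j = ∑ m ∈ range N, 𝓕.F i (m : ℤ) * pow1 𝓕.inv m j := by
  unfold FormalGroupLaw.Fzi
  rw [fn _ N]
  intro m h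
  have h2 : pow1 𝓕.inv m j ≠ 0 := fun hc => h (by rw [hc, mul_zero])
  by_contra hc
  exact h2 (pow1_supp (ps1_inv 𝓕) (inv0 𝓕) m j (by omega))

lemma dg_Fzi : dg 𝓕.Fzi = sub2 𝓕.inv 𝓕.F := by
  funext n
  rcases lt_or_ge n 0 with hn | hn
  · rw [ps1_dg (ps2_Fzi 𝓕) n hn, ps1_sub2 (ps1_inv 𝓕) (ps2_F 𝓕) n hn]
  set N := n.toNat + 1 with hNdef
  have hN : n < (N : ℤ) := by omega
  rw [dg_range (ps2_Fzi 𝓕) n N hN, sub2_range (ps1_inv 𝓕) (inv0 𝓕) (ps2_F 𝓕) n N hN]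
  refine Finset.sum_congr rfl fun i hi => ?_
  rw [Finset.mem_range] at hi
  rw [Fzi_range 𝓕 i (n - i) N (by omega)]
  exact Finset.sum_congr rfl fun m _ => by rw [pw_natCast]

lemma dg_Fzi_zero : dg 𝓕.Fzi = 0 := by
  funext n
  rcases lt_or_ge n 0 with hn | hn
  · rw [ps1_dg (ps2_Fzi 𝓕) n hn]; rfl
  have h := 𝓕.inv_eq n
  set N := n.toNat + 1 with hNdef
  rw [fzn (fun p m => 𝓕.F p (m : ℤ) * pow1 𝓕.inv m (n - p)) N ?_] at h
  · rw [dg_range (ps2_Fzi 𝓕) n N (by omega), Pi.zero_apply, ← h]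
    refine Finset.sum_congr rfl fun i hi => ?_
    rw [Finset.mem_range] at hi
    exact Fzi_range 𝓕 i (n - i) N (by omega)
  · intro p m hpm
    have hpm' : 𝓕.F p (m : ℤ) * pow1 𝓕.inv m (n - p) ≠ 0 := hpm
    have h1 : 𝓕.F p m ≠ 0 := fun hc => hpm' (by rw [hc, zero_mul])
    have h2 : pow1 𝓕.inv m (n - p) ≠ 0 := fun hc => hpm' (by rw [hc, mul_zero])
    have h3 : ¬ (p < 0) := fun hc => h1 (𝓕.F_supp p m (Or.inl hc))
    have h4 : ¬ (n - p < m) := fun hc => h2 (pow1_supp (ps1_inv 𝓕) (inv0 𝓕) m _ hc)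
    constructor <;> [constructor; skip] <;> omega

lemma sub2_inv_F_zero : sub2 𝓕.inv 𝓕.F = 0 := by
  rw [← dg_Fzi]; exact dg_Fzi_zero 𝓕

lemma sub2_one {σ : ℤ → R} : sub2 σ (oneS2 R) = oneS R := by
  funext n
  unfold sub2
  rw [finsum_eq_single _ ((0 : ℤ), (0 : ℤ))]
  · show oneS2 R 0 0 * pw σ 0 (n - 0) = _
    unfold oneS2 pw
    rw [if_pos ⟨rfl, rfl⟩, if_pos le_rfl, one_mul, sub_zero]
    rfl
  · rintro ⟨p, q⟩ hne
    show oneS2 R p q * _ = 0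
    unfold oneS2
    rw [if_neg, zero_mul]
    rintro ⟨rfl, rfl⟩
    exact hne rfl

lemma sub2_pow2_F (m : ℕ) :
    sub2 𝓕.inv (pow2 𝓕.F m) = if m = 0 then oneS R else 0 := by
  cases m with
  | zero => rw [if_pos rfl]; exact sub2_one
  | succ m =>
    rw [if_neg (Nat.succ_ne_zero m)]
    show sub2 𝓕.inv (mulS2 𝓕.F (pow2 𝓕.F m)) = 0
    rw [sub2_mul (ps1_inv 𝓕) (inv0 𝓕) (ps2_F 𝓕) (ps2_pow2 (ps2_F 𝓕) m),
      sub2_inv_F_zero, zero_mulS]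

lemma sub2_d10_pow2_F (m : ℕ) :
    sub2 𝓕.inv (d10 (pow2 𝓕.F m)) =
      if m = 1 then sub2 𝓕.inv (d10 𝓕.F) else 0 := by
  cases m with
  | zero =>
    rw [if_neg (by omega)]
    show sub2 𝓕.inv (d10 (oneS2 R)) = 0
    rw [d10_oneS2, sub2_zero]
  | succ m =>
    have step : d10 (pow2 𝓕.F (m + 1)) =
        fun i j => mulS2 (d10 𝓕.F) (pow2 𝓕.F m) i j + mulS2 𝓕.F (d10 (pow2 𝓕.F m)) i j :=
      d10_mul (ps2_F 𝓕) (ps2_pow2 (ps2_F 𝓕) m)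
    rw [step, sub2_add (ps1_inv 𝓕) (inv0 𝓕)
        (ps2_mulS2 (ps2_d10 (ps2_F 𝓕)) (ps2_pow2 (ps2_F 𝓕) m))
        (ps2_mulS2 (ps2_F 𝓕) (ps2_d10 (ps2_pow2 (ps2_F 𝓕) m)))]
    rw [show (fun n => sub2 𝓕.inv (mulS2 (d10 𝓕.F) (pow2 𝓕.F m)) n
        + sub2 𝓕.inv (mulS2 𝓕.F (d10 (pow2 𝓕.F m))) n)
      = fun n => (mulS (sub2 𝓕.inv (d10 𝓕.F)) (sub2 𝓕.inv (pow2 𝓕.F m))) n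
        + (mulS (sub2 𝓕.inv 𝓕.F) (sub2 𝓕.inv (d10 (pow2 𝓕.F m)))) n by
      rw [sub2_mul (ps1_inv 𝓕) (inv0 𝓕) (ps2_d10 (ps2_F 𝓕)) (ps2_pow2 (ps2_F 𝓕) m),
        sub2_mul (ps1_inv 𝓕) (inv0 𝓕) (ps2_F 𝓕) (ps2_d10 (ps2_pow2 (ps2_F 𝓕) m))]]
    rw [sub2_inv_F_zero, zero_mulS, sub2_pow2_F]
    cases m with
    | zero =>
      rw [if_pos rfl, if_pos rfl]
      funext n
      show mulS (sub2 𝓕.inv (d10 𝓕.F)) (oneS R) n + (0 : ℤ → R) n = _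
      rw [mulS_one (ps1_sub2 (ps1_inv 𝓕) (ps2_d10 (ps2_F 𝓕))), Pi.zero_apply, add_zero]
    | succ m =>
      rw [if_neg (Nat.succ_ne_zero m), if_neg (by omega), mulS_zero]
      funext n
      show (0 : ℤ → R) n + (0 : ℤ → R) n = (0 : ℤ → R) n
      rw [Pi.zero_apply, add_zero]

lemma sub2_d10F_eq : sub2 𝓕.inv (d10 𝓕.F) = dg (d10 𝓕.Fzi) := by
  funext n
  rcases lt_or_ge n 0 with hn | hn
  · rw [ps1_sub2 (ps1_inv 𝓕) (ps2_d10 (ps2_F 𝓕)) n hn,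
      ps1_dg (ps2_d10 (ps2_Fzi 𝓕)) n hn]
  set N := n.toNat + 1 with hNdef
  have hN : n < (N : ℤ) := by omega
  rw [sub2_range (ps1_inv 𝓕) (inv0 𝓕) (ps2_d10 (ps2_F 𝓕)) n N hN,
    dg_range (ps2_d10 (ps2_Fzi 𝓕)) n N hN]
  refine Finset.sum_congr rfl fun i hi => ?_
  rw [Finset.mem_range] at hi
  show _ = ((i : ℤ) + 1 : ℤ) * 𝓕.Fzi (i + 1) (n - i)
  rw [Fzi_range 𝓕 ((i : ℤ) + 1) (n - i) N (by omega), Finset.mul_sum]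
  refine Finset.sum_congr rfl fun m _ => ?_
  rw [pw_natCast]
  show ((i : ℤ) + 1 : ℤ) * 𝓕.F ((i : ℤ) + 1) m * pow1 𝓕.inv m (n - i) = _
  ring

end
end FGL
end GAux


namespace GAux
section Master
open Finset PowerSeries
variable {R : Type*} [CommRing R] (𝓕 : FormalGroupLaw R)

noncomputable section

lemma ps2_sw {f : ℤ → ℤ → R} (hf : PS2 f) : PS2 (sw f) := by
  intro i j hij
  exact hf j i (Or.symm hij)

lemma dgG_eq (G : ℤ → ℤ → R) (hG : PS2 G) (hFG : 𝓕.Fzi = mulS2 (zmw R) G) :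
    dg (d10 𝓕.Fzi) = dg G := by
  have h1 : d10 𝓕.Fzi = fun i j => mulS2 (d10 (zmw R)) G i j + mulS2 (zmw R) (d10 G) i j := by
    rw [hFG]; exact d10_mul ps2_zmw hG
  have h2 : dg (d10 𝓕.Fzi) = fun n => mulS (dg (d10 (zmw R))) (dg G) n
      + mulS (dg (zmw R)) (dg (d10 G)) n := by
    rw [h1, dg_add (ps2_mulS2 (ps2_d10 ps2_zmw) hG) (ps2_mulS2 ps2_zmw (ps2_d10 hG)),
      dg_mul (ps2_d10 ps2_zmw) hG, dg_mul ps2_zmw (ps2_d10 hG)]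
  rw [h2, d10_zmw, dg_oneS2, dg_zmw, zero_mulS, one_mulS (ps1_dg hG)]
  funext n
  rw [Pi.zero_apply, add_zero]

lemma main_identity (G : ℤ → ℤ → R) (hG : PS2 G) (hFG : 𝓕.Fzi = mulS2 (zmw R) G) :
    mulS (fun i => 𝓕.F i 1) (dg G) = oneS R := by
  have hA : PS1 (fun i : ℤ => 𝓕.F i 1) := fun i hi => 𝓕.F_supp i 1 (Or.inl hi)
  funext n
  rcases lt_or_ge n 0 with hn | hn
  · rw [ps1_mulS hA (ps1_dg hG) n hn, ps1_oneS n hn]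
  set N := n.toNat + 1 with hNdef
  set M := 2 * N with hMdef
  have hN : n < (N : ℤ) := by omega
  -- Way 1 : the master sum evaluates to `oneS R n`
  have hW1 : (∑ a ∈ range N, ∑ c ∈ range N, ∑ b ∈ range N,
      (((a : ℤ) + 1 : ℤ) : R) * pw 𝓕.inv (b : ℤ) (n - a - c) *
        (∑ᶠ m : ℕ, 𝓕.F ((a : ℤ) + 1) (m : ℤ) * pow2 𝓕.F m (b : ℤ) (c : ℤ)))
      = oneS R n := by
    have step1 : ∀ a ∈ range N, ∀ c ∈ range N, ∀ b ∈ range N,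
        (((a : ℤ) + 1 : ℤ) : R) * pw 𝓕.inv (b : ℤ) (n - a - c) *
          (∑ᶠ m : ℕ, 𝓕.F ((a : ℤ) + 1) (m : ℤ) * pow2 𝓕.F m (b : ℤ) (c : ℤ))
        = ∑ m ∈ range M,
          ((((a : ℤ) + 1 : ℤ) : R) * 𝓕.F ((a : ℤ) + 1) (m : ℤ)) *
            (sw (pow2 𝓕.F m) (c : ℤ) (b : ℤ) * pw 𝓕.inv (b : ℤ) (n - a - c)) := by
      intro a ha c hc b hb
      rw [Finset.mem_range] at ha hc hb
      rw [fn (fun m => 𝓕.F ((a : ℤ) + 1) (m : ℤ) * pow2 𝓕.F m (b : ℤ) (c : ℤ)) M ?_]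
      · rw [Finset.mul_sum]
        refine Finset.sum_congr rfl fun m _ => ?_
        have hsw : sw (pow2 𝓕.F m) (c : ℤ) (b : ℤ) = pow2 𝓕.F m (b : ℤ) (c : ℤ) := rfl
        rw [hsw]
        ring
      · intro m hm
        have hm' : 𝓕.F ((a : ℤ) + 1) (m : ℤ) * pow2 𝓕.F m (b : ℤ) (c : ℤ) ≠ 0 := hm
        have h2 : pow2 𝓕.F m (b : ℤ) (c : ℤ) ≠ 0 := fun hc' => hm' (by rw [hc', mul_zero])
        by_contra hcon
        exact h2 (pow2_supp (ps2_F 𝓕) (F00 𝓕) m _ _ (by push_cast; omega))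
    rw [Finset.sum_congr rfl fun a ha => Finset.sum_congr rfl fun c hc =>
      Finset.sum_congr rfl fun b hb => step1 a ha c hc b hb]
    have step2 : ∀ a ∈ range N,
        (∑ c ∈ range N, ∑ b ∈ range N, ∑ m ∈ range M,
          ((((a : ℤ) + 1 : ℤ) : R) * 𝓕.F ((a : ℤ) + 1) (m : ℤ)) *
            (sw (pow2 𝓕.F m) (c : ℤ) (b : ℤ) * pw 𝓕.inv (b : ℤ) (n - a - c)))
        = ∑ m ∈ range M,
          ((((a : ℤ) + 1 : ℤ) : R) * 𝓕.F ((a : ℤ) + 1) (m : ℤ)) *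
            ((if m = 0 then oneS R else 0) (n - a)) := by
      intro a ha
      rw [Finset.mem_range] at ha
      rw [(rot3 (fun m c b =>
        ((((a : ℤ) + 1 : ℤ) : R) * 𝓕.F ((a : ℤ) + 1) (m : ℤ)) *
          (sw (pow2 𝓕.F m) (c : ℤ) (b : ℤ) * pw 𝓕.inv (b : ℤ) (n - a - c)))).symm]
      refine Finset.sum_congr rfl fun m _ => ?_
      rw [show ∀ X : ℕ → ℕ → R, (∑ c ∈ range N, ∑ b ∈ range N,
          ((((a : ℤ) + 1 : ℤ) : R) * 𝓕.F ((a : ℤ) + 1) (m : ℤ)) * X c b)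
          = ((((a : ℤ) + 1 : ℤ) : R) * 𝓕.F ((a : ℤ) + 1) (m : ℤ)) *
            ∑ c ∈ range N, ∑ b ∈ range N, X c b from fun X => by
        rw [Finset.mul_sum]
        exact Finset.sum_congr rfl fun c _ => by rw [Finset.mul_sum]]
      congr 1
      rw [← sub2_range (ps1_inv 𝓕) (inv0 𝓕) (ps2_sw (ps2_pow2 (ps2_F 𝓕) m))
        (n - (a : ℤ)) N (by omega)]
      rw [sw_pow2, sw_F 𝓕, sub2_pow2_F 𝓕 m]
    rw [Finset.sum_congr rfl step2]
    rw [Finset.sum_congr rfl (fun a (ha : a ∈ range N) =>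
      Finset.sum_eq_single_of_mem 0 (Finset.mem_range.mpr (by omega))
        (fun m _ hm => by rw [if_neg hm, Pi.zero_apply, mul_zero]))]
    rw [Finset.sum_eq_single_of_mem 0 (Finset.mem_range.mpr (by omega))]
    · rw [if_pos rfl]
      simp only [Nat.cast_zero, Nat.cast_one, zero_add, sub_zero]
      rw [F10 𝓕]
      norm_num
    · intro a _ ha
      rw [if_pos rfl]
      simp only [Nat.cast_zero]
      rw [Fi0 𝓕, if_neg (by omega), mul_zero, zero_mul]
  -- Way 2 : the master sum evaluates to the convolution
  have hW2 : (∑ a ∈ range N, ∑ c ∈ range N, ∑ b ∈ range N,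
      (((a : ℤ) + 1 : ℤ) : R) * pw 𝓕.inv (b : ℤ) (n - a - c) *
        (∑ᶠ m : ℕ, 𝓕.F ((a : ℤ) + 1) (m : ℤ) * pow2 𝓕.F m (b : ℤ) (c : ℤ)))
      = ∑ c ∈ range N, 𝓕.F 1 (c : ℤ) * dg G (n - c) := by
    have step1 : ∀ a ∈ range N, ∀ c ∈ range N, ∀ b ∈ range N,
        (((a : ℤ) + 1 : ℤ) : R) * pw 𝓕.inv (b : ℤ) (n - a - c) *
          (∑ᶠ m : ℕ, 𝓕.F ((a : ℤ) + 1) (m : ℤ) * pow2 𝓕.F m (b : ℤ) (c : ℤ))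
        = ∑ m ∈ range M, 𝓕.F (m : ℤ) (c : ℤ) *
            (d10 (pow2 𝓕.F m) (a : ℤ) (b : ℤ) * pw 𝓕.inv (b : ℤ) ((n - c) - a)) := by
      intro a ha c hc b hb
      rw [Finset.mem_range] at ha hc hb
      rw [← 𝓕.F_assoc ((a : ℤ) + 1) (b : ℤ) (c : ℤ)]
      rw [fn (fun m => 𝓕.F (m : ℤ) (c : ℤ) * pow2 𝓕.F m ((a : ℤ) + 1) (b : ℤ)) M ?_]
      · rw [Finset.mul_sum]
        refine Finset.sum_congr rfl fun m _ => ?_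
        have hd : d10 (pow2 𝓕.F m) (a : ℤ) (b : ℤ)
            = (((a : ℤ) + 1 : ℤ) : R) * pow2 𝓕.F m ((a : ℤ) + 1) (b : ℤ) := rfl
        rw [hd, show (n - (c : ℤ)) - (a : ℤ) = n - a - c by ring]
        ring
      · intro m hm
        have hm' : 𝓕.F (m : ℤ) (c : ℤ) * pow2 𝓕.F m ((a : ℤ) + 1) (b : ℤ) ≠ 0 := hm
        have h2 : pow2 𝓕.F m ((a : ℤ) + 1) (b : ℤ) ≠ 0 :=
          fun hc' => hm' (by rw [hc', mul_zero])
        by_contra hcon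
        exact h2 (pow2_supp (ps2_F 𝓕) (F00 𝓕) m _ _ (by push_cast; omega))
    rw [Finset.sum_congr rfl fun a ha => Finset.sum_congr rfl fun c hc =>
      Finset.sum_congr rfl fun b hb => step1 a ha c hc b hb]
    -- now reorder : a, c, b(m inside) — move m out of b, then a inside
    have step2 : ∀ a ∈ range N, ∀ c ∈ range N,
        (∑ b ∈ range N, ∑ m ∈ range M, 𝓕.F (m : ℤ) (c : ℤ) *
            (d10 (pow2 𝓕.F m) (a : ℤ) (b : ℤ) * pw 𝓕.inv (b : ℤ) ((n - c) - a)))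
        = ∑ m ∈ range M, ∑ b ∈ range N, 𝓕.F (m : ℤ) (c : ℤ) *
            (d10 (pow2 𝓕.F m) (a : ℤ) (b : ℤ) * pw 𝓕.inv (b : ℤ) ((n - c) - a)) :=
      fun a _ c _ => Finset.sum_comm
    rw [Finset.sum_congr rfl fun a ha => Finset.sum_congr rfl fun c hc => step2 a ha c hc]
    rw [rot3 (fun a c m => ∑ b ∈ range N, 𝓕.F (m : ℤ) (c : ℤ) *
      (d10 (pow2 𝓕.F m) (a : ℤ) (b : ℤ) * pw 𝓕.inv (b : ℤ) ((n - c) - a)))]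
    refine Finset.sum_congr rfl fun c hc => ?_
    rw [Finset.mem_range] at hc
    have step3 : ∀ m ∈ range M,
        (∑ a ∈ range N, ∑ b ∈ range N, 𝓕.F (m : ℤ) (c : ℤ) *
          (d10 (pow2 𝓕.F m) (a : ℤ) (b : ℤ) * pw 𝓕.inv (b : ℤ) ((n - c) - a)))
        = 𝓕.F (m : ℤ) (c : ℤ) *
            ((if m = 1 then sub2 𝓕.inv (d10 𝓕.F) else 0) (n - c)) := by
      intro m _
      rw [show (∑ a ∈ range N, ∑ b ∈ range N, 𝓕.F (m : ℤ) (c : ℤ) *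
          (d10 (pow2 𝓕.F m) (a : ℤ) (b : ℤ) * pw 𝓕.inv (b : ℤ) ((n - c) - a)))
          = 𝓕.F (m : ℤ) (c : ℤ) * ∑ a ∈ range N, ∑ b ∈ range N,
            (d10 (pow2 𝓕.F m) (a : ℤ) (b : ℤ) * pw 𝓕.inv (b : ℤ) ((n - c) - a)) from by
        rw [Finset.mul_sum]
        exact Finset.sum_congr rfl fun a _ => by rw [Finset.mul_sum]]
      congr 1
      rw [show (∑ a ∈ range N, ∑ b ∈ range N,
          (d10 (pow2 𝓕.F m) (a : ℤ) (b : ℤ) * pw 𝓕.inv (b : ℤ) ((n - c) - a)))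
          = sub2 𝓕.inv (d10 (pow2 𝓕.F m)) (n - c) from
        (sub2_range (ps1_inv 𝓕) (inv0 𝓕) (ps2_d10 (ps2_pow2 (ps2_F 𝓕) m))
          (n - (c : ℤ)) N (by omega)).symm]
      rw [sub2_d10_pow2_F 𝓕 m]
    rw [Finset.sum_congr rfl step3]
    rw [Finset.sum_eq_single_of_mem 1 (Finset.mem_range.mpr (by omega))]
    · rw [if_pos rfl, sub2_d10F_eq 𝓕, dgG_eq 𝓕 G hG hFG]
      norm_num
    · intro m _ hm
      rw [if_neg hm, Pi.zero_apply, mul_zero]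
  -- conclude
  rw [mulS_range hA (ps1_dg hG) n N hN]
  calc ∑ i ∈ range N, 𝓕.F (i : ℤ) 1 * dg G (n - i)
      = ∑ c ∈ range N, 𝓕.F 1 (c : ℤ) * dg G (n - c) :=
        Finset.sum_congr rfl fun i _ => by rw [𝓕.F_comm]
    _ = oneS R n := by rw [← hW2, hW1]

end
end Master
end GAux


namespace GAux
section Final
open Finset PowerSeries
variable {R : Type*} [CommRing R] (𝓕 : FormalGroupLaw R)

noncomputable section

def Gd : ℤ → ℤ → R := fun i j =>
  if 0 ≤ i ∧ 0 ≤ j then ∑ k ∈ range (j.toNat + 1), 𝓕.Fzi (i + 1 + k) (j - k) else 0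

lemma ps2_Gd : PS2 (Gd 𝓕) := by
  intro i j hij
  unfold Gd
  rw [if_neg]
  rintro ⟨h1, h2⟩
  omega

lemma Gd_pos (i j : ℤ) (hi : 0 ≤ i) (hj : 0 ≤ j) :
    Gd 𝓕 i j = ∑ k ∈ range (j.toNat + 1), 𝓕.Fzi (i + 1 + k) (j - k) := if_pos ⟨hi, hj⟩

lemma Gd_shift (a b : ℤ) (ha : 0 ≤ a) (hb : 0 ≤ b) :
    Gd 𝓕 a (b - 1) = ∑ k ∈ range b.toNat, 𝓕.Fzi (a + 1 + k) (b - 1 - k) := by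
  by_cases hb0 : b = 0
  · subst hb0
    rw [ps2_Gd 𝓕 a ((0 : ℤ) - 1) (Or.inr (by omega)),
      show (0 : ℤ).toNat = 0 from rfl, Finset.range_zero, Finset.sum_empty]
  · have hb1 : 0 ≤ b - 1 := by omega
    rw [Gd_pos 𝓕 a (b - 1) ha hb1, show (b - 1).toNat + 1 = b.toNat by omega]

lemma Gd_solves : 𝓕.Fzi = mulS2 (zmw R) (Gd 𝓕) := by
  funext a b
  rw [mulS2_zmw]
  rcases lt_or_ge b 0 with hb | hb
  · rw [ps2_Fzi 𝓕 a b (Or.inr hb), ps2_Gd 𝓕 (a - 1) b (Or.inr hb),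
      ps2_Gd 𝓕 a (b - 1) (Or.inr (by omega))]
    ring
  rcases lt_or_ge a 0 with ha | ha
  · rw [ps2_Fzi 𝓕 a b (Or.inl ha), ps2_Gd 𝓕 (a - 1) b (Or.inl (by omega)),
      ps2_Gd 𝓕 a (b - 1) (Or.inl ha)]
    ring
  rcases eq_or_lt_of_le ha with ha0 | ha1
  · rw [← ha0]
    rw [ps2_Gd 𝓕 ((0 : ℤ) - 1) b (Or.inl (by omega)), Gd_shift 𝓕 0 b le_rfl hb]
    have hdg := congrFun (dg_Fzi_zero 𝓕) b
    rw [dg_range (ps2_Fzi 𝓕) b (b.toNat + 1) (by omega), Finset.sum_range_succ'] at hdg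
    have e : ∀ k ∈ range b.toNat,
        𝓕.Fzi ((k + 1 : ℕ) : ℤ) (b - ((k + 1 : ℕ) : ℤ)) = 𝓕.Fzi (0 + 1 + (k : ℤ)) (b - 1 - k) := by
      intro k _
      congr 1 <;> push_cast <;> ring
    rw [Finset.sum_congr rfl e] at hdg
    have e2 : 𝓕.Fzi (((0 : ℕ)) : ℤ) (b - (((0 : ℕ)) : ℤ)) = 𝓕.Fzi 0 b := by
      congr 1 <;> push_cast <;> ring
    rw [e2, Pi.zero_apply] at hdg
    linear_combination hdg
  · rw [Gd_pos 𝓕 (a - 1) b (by omega) hb, Gd_shift 𝓕 a b (by omega) hb]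
    rw [Finset.sum_range_succ' (fun k => 𝓕.Fzi ((a - 1) + 1 + (k : ℤ)) (b - k)) b.toNat]
    have e : ∀ k ∈ range b.toNat,
        𝓕.Fzi ((a - 1) + 1 + ((k + 1 : ℕ) : ℤ)) (b - ((k + 1 : ℕ) : ℤ))
          = 𝓕.Fzi (a + 1 + (k : ℤ)) (b - 1 - k) := by
      intro k _
      congr 1 <;> push_cast <;> ring
    rw [Finset.sum_congr rfl e]
    have e2 : 𝓕.Fzi ((a - 1) + 1 + (((0 : ℕ)) : ℤ)) (b - (((0 : ℕ)) : ℤ)) = 𝓕.Fzi a b := by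
      congr 1 <;> push_cast <;> ring
    rw [e2]
    ring

lemma G_unique (G1 G2 : ℤ → ℤ → R) (h1 : PS2 G1) (h2 : PS2 G2)
    (e1 : 𝓕.Fzi = mulS2 (zmw R) G1) (e2 : 𝓕.Fzi = mulS2 (zmw R) G2) : G1 = G2 := by
  have key : ∀ a b : ℤ, G1 (a - 1) b - G1 a (b - 1) = G2 (a - 1) b - G2 a (b - 1) := by
    intro a b
    have h := congrFun (congrFun (e1.symm.trans e2) a) b
    rw [mulS2_zmw, mulS2_zmw] at h
    exact h
  have main : ∀ jn : ℕ, ∀ j : ℤ, j < jn → ∀ i : ℤ, G1 i j = G2 i j := by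
    intro jn
    induction jn with
    | zero =>
      intro j hj i
      have hneg : j < 0 := by exact_mod_cast hj
      rw [h1 i j (Or.inr hneg), h2 i j (Or.inr hneg)]
    | succ m ih =>
      intro j hj i
      rcases lt_or_ge j 0 with hneg | hpos
      · rw [h1 i j (Or.inr hneg), h2 i j (Or.inr hneg)]
      · have hk := key (i + 1) j
        simp only [add_sub_cancel_right] at hk
        have hih := ih (j - 1) (by omega) (i + 1)
        linear_combination hk + hih
  funext i j
  exact main (j.toNat + 1) j (by omega) i

lemma pow2_F_b0 (m : ℕ) : ∀ k : ℤ, pow2 𝓕.F m k 0 = if k = m then 1 else 0 := by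
  induction m with
  | zero =>
    intro k
    show oneS2 R k 0 = _
    unfold oneS2
    rcases eq_or_ne k 0 with rfl | h
    · rw [if_pos ⟨rfl, rfl⟩, if_pos (by norm_num)]
    · rw [if_neg (fun hc => h hc.1), if_neg (by exact_mod_cast h)]
  | succ m ih =>
    intro k
    rcases lt_or_ge k 0 with hk | hk
    · rw [ps2_pow2 (ps2_F 𝓕) (m + 1) k 0 (Or.inl hk), if_neg (by push_cast; omega)]
    · show mulS2 𝓕.F (pow2 𝓕.F m) k 0 = _
      rw [mulS2_range (ps2_F 𝓕) (ps2_pow2 (ps2_F 𝓕) m) hk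
        (by omega : k < ((k.toNat + 1 : ℕ) : ℤ)) le_rfl (by norm_num : (0 : ℤ) < ((1 : ℕ) : ℤ))]
      have inner : ∀ p ∈ range (k.toNat + 1),
          (∑ q ∈ range 1, 𝓕.F (p : ℤ) (q : ℤ) * pow2 𝓕.F m (k - p) (0 - q))
            = (if (p : ℤ) = 1 then (1 : R) else 0) * (if k - (p : ℤ) = m then 1 else 0) := by
        intro p _
        rw [Finset.sum_range_one]
        simp only [Nat.cast_zero, sub_zero]
        rw [Fi0 𝓕, ih (k - p)]
      rw [Finset.sum_congr rfl inner]
      rcases lt_or_ge k 1 with hk1 | hk1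
      · have hz : (∑ p ∈ range (k.toNat + 1),
            (if (p : ℤ) = 1 then (1 : R) else 0) * (if k - (p : ℤ) = m then 1 else 0)) = 0 := by
          refine Finset.sum_eq_zero fun p hp => ?_
          rw [Finset.mem_range] at hp
          rw [if_neg (show ¬((p : ℤ) = 1) by omega), zero_mul]
        rw [hz, if_neg (by push_cast; omega)]
      · rw [Finset.sum_eq_single_of_mem 1 (Finset.mem_range.mpr (by omega))]
        · rw [Nat.cast_one, if_pos rfl, one_mul]
          by_cases h : k - 1 = (m : ℤ)
          · rw [if_pos h, if_pos (by push_cast; omega)]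
          · rw [if_neg h, if_neg (by push_cast at h ⊢; omega)]
        · intro p _ hp
          rw [if_neg (show ¬((p : ℤ) = 1) by omega), zero_mul]

lemma pow2_F_b1 (m : ℕ) : ∀ a : ℤ, pow2 𝓕.F m a 1 = (m : R) * 𝓕.F (a - m + 1) 1 := by
  induction m with
  | zero =>
    intro a
    show oneS2 R a 1 = _
    rw [Nat.cast_zero, zero_mul]
    unfold oneS2
    rw [if_neg (fun hc => by omega)]
  | succ m ih =>
    intro a
    rcases lt_or_ge a 0 with ha | ha
    · rw [ps2_pow2 (ps2_F 𝓕) _ a 1 (Or.inl ha),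
        𝓕.F_supp (a - ((m + 1 : ℕ) : ℤ) + 1) 1 (Or.inl (by push_cast; omega)), mul_zero]
    · show mulS2 𝓕.F (pow2 𝓕.F m) a 1 = _
      rw [mulS2_range (ps2_F 𝓕) (ps2_pow2 (ps2_F 𝓕) m) ha
        (by omega : a < ((a.toNat + 1 : ℕ) : ℤ)) (by norm_num)
        (by norm_num : (1 : ℤ) < ((2 : ℕ) : ℤ))]
      have inner : ∀ p ∈ range (a.toNat + 1),
          (∑ q ∈ range 2, 𝓕.F (p : ℤ) (q : ℤ) * pow2 𝓕.F m (a - p) (1 - q))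
            = 𝓕.F (p : ℤ) 0 * pow2 𝓕.F m (a - p) 1 + 𝓕.F (p : ℤ) 1 * pow2 𝓕.F m (a - p) 0 := by
        intro p _
        rw [Finset.sum_range_succ, Finset.sum_range_one]
        simp only [Nat.cast_zero, Nat.cast_one, sub_zero, sub_self]
      rw [Finset.sum_congr rfl inner, Finset.sum_add_distrib]
      have h1 : (∑ p ∈ range (a.toNat + 1), 𝓕.F (p : ℤ) 0 * pow2 𝓕.F m (a - p) 1)
          = (m : R) * 𝓕.F (a - m) 1 := by
        rcases lt_or_ge a 1 with ha1 | ha1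
        · have hz : (∑ p ∈ range (a.toNat + 1), 𝓕.F (p : ℤ) 0 * pow2 𝓕.F m (a - p) 1) = 0 := by
            refine Finset.sum_eq_zero fun p hp => ?_
            rw [Finset.mem_range] at hp
            rw [Fi0 𝓕, if_neg (show ¬((p : ℤ) = 1) by omega), zero_mul]
          rw [hz]
          cases m with
          | zero => rw [Nat.cast_zero, zero_mul]
          | succ m' => rw [𝓕.F_supp (a - ((m' + 1 : ℕ) : ℤ)) 1 (Or.inl (by push_cast; omega)),
              mul_zero]
        · rw [Finset.sum_eq_single_of_mem 1 (Finset.mem_range.mpr (by omega))]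
          · rw [Nat.cast_one, Fi0 𝓕, if_pos rfl, one_mul, ih (a - 1),
              show a - 1 - (m : ℤ) + 1 = a - m by ring]
          · intro p _ hp
            rw [Fi0 𝓕, if_neg (show ¬((p : ℤ) = 1) by omega), zero_mul]
      have h2 : (∑ p ∈ range (a.toNat + 1), 𝓕.F (p : ℤ) 1 * pow2 𝓕.F m (a - p) 0)
          = 𝓕.F (a - m) 1 := by
        have e : ∀ p ∈ range (a.toNat + 1), 𝓕.F (p : ℤ) 1 * pow2 𝓕.F m (a - p) 0
            = 𝓕.F (p : ℤ) 1 * (if a - (p : ℤ) = m then 1 else 0) :=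
          fun p _ => by rw [pow2_F_b0 𝓕 m (a - p)]
        rw [Finset.sum_congr rfl e]
        rcases lt_or_ge (a - m) 0 with ham | ham
        · rw [𝓕.F_supp (a - m) 1 (Or.inl ham)]
          refine Finset.sum_eq_zero fun p hp => ?_
          rw [if_neg (by omega), mul_zero]
        · rw [Finset.sum_eq_single_of_mem (a - (m : ℤ)).toNat (Finset.mem_range.mpr (by omega))]
          · rw [if_pos (by omega), mul_one, show (((a - (m : ℤ)).toNat : ℕ) : ℤ) = a - m by omega]
          · intro p _ hp
            rw [if_neg (by omega), mul_zero]
      rw [h1, h2, show a - ((m + 1 : ℕ) : ℤ) + 1 = a - m by push_cast; ring]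
      push_cast
      ring

lemma inv_exists {G : ℤ → ℤ → R} (hG : PS2 G) (h1 : G 0 0 = 1) :
    ∃ H : ℤ → ℤ → R, (∀ i j : ℤ, i < 0 ∨ j < 0 → H i j = 0) ∧ mulS2 G H = oneS2 R := by
  have hunit : IsUnit (toP2 G) := by
    rw [PowerSeries.isUnit_iff_constantCoeff, PowerSeries.isUnit_iff_constantCoeff]
    have e : (PowerSeries.constantCoeff (R := R))
        ((PowerSeries.constantCoeff (R := PowerSeries R)) (toP2 G)) = G 0 0 := by
      rw [← PowerSeries.coeff_zero_eq_constantCoeff, ← PowerSeries.coeff_zero_eq_constantCoeff]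
      simpa using toP2_coeff G 0 0
    rw [e, h1]
    exact isUnit_one
  obtain ⟨u, hu⟩ := hunit
  set H : ℤ → ℤ → R := fun i j =>
    if 0 ≤ i ∧ 0 ≤ j then PowerSeries.coeff j.toNat
      ((PowerSeries.coeff i.toNat) ((u⁻¹ : (PP R)ˣ) : PP R)) else 0 with hH
  have hHps : PS2 H := by
    intro i j hij
    rw [hH]
    dsimp only
    rw [if_neg]
    rintro ⟨hh1, hh2⟩
    omega
  have hHtoP2 : toP2 H = ((u⁻¹ : (PP R)ˣ) : PP R) := by
    apply PowerSeries.ext; intro i; apply PowerSeries.ext; intro j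
    rw [toP2_coeff, hH]
    dsimp only
    rw [if_pos ⟨Int.natCast_nonneg i, Int.natCast_nonneg j⟩]
    rfl
  refine ⟨H, hHps, ?_⟩
  apply ps2_ext (ps2_mulS2 hG hHps) ps2_oneS2
  rw [toP2_mulS2 hG hHps, toP2_oneS2, hHtoP2, ← hu]
  exact Units.mul_inv u

lemma ps1_fderiv {φ : ℤ → R} (hφ : ∀ n : ℤ, n < 0 → φ n = 0) : PS1 (fderiv1 φ) := by
  intro n hn
  unfold fderiv1
  rcases eq_or_ne n (-1) with rfl | h
  · norm_num
  · rw [hφ (n + 1) (by omega), mul_zero]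

lemma log_identity (φ : ℤ → R) (hφ : 𝓕.IsLogarithm φ) :
    mulS (fun i => 𝓕.F i 1) (fderiv1 φ) = oneS R := by
  obtain ⟨hsupp, h0, h1, heq⟩ := hφ
  have hA : PS1 (fun i : ℤ => 𝓕.F i 1) := fun i hi => 𝓕.F_supp i 1 (Or.inl hi)
  funext a
  rcases lt_or_ge a 0 with ha | ha
  · rw [ps1_mulS hA (ps1_fderiv hsupp) a ha, ps1_oneS a ha]
  set N := a.toNat + 2 with hN
  have key := heq a 1
  rw [if_neg (by norm_num), zero_add] at key
  rw [fn (fun m => φ (m : ℤ) * pow2 𝓕.F m a 1) N ?_] at key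
  · rw [mulS_range hA (ps1_fderiv hsupp) a N (by omega), ← Finset.sum_range_reflect]
    have eterm : ∀ m ∈ range N,
        𝓕.F (((N - 1 - m : ℕ)) : ℤ) 1 * fderiv1 φ (a - ((N - 1 - m : ℕ) : ℤ))
          = φ (m : ℤ) * pow2 𝓕.F m a 1 := by
      intro m hm
      rw [Finset.mem_range] at hm
      rw [pow2_F_b1 𝓕 m a]
      have e1 : ((N - 1 - m : ℕ) : ℤ) = a + 1 - m := by omega
      rw [e1]
      unfold fderiv1
      rw [show a - (a + 1 - (m : ℤ)) + 1 = (m : ℤ) by ring,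
        show a + 1 - (m : ℤ) = a - m + 1 by ring]
      push_cast
      ring
    rw [Finset.sum_congr rfl eterm, key]
    unfold oneS
    rcases eq_or_ne a 0 with rfl | ha0
    · rw [if_pos rfl, if_pos rfl, h1]
    · rw [if_neg ha0, if_neg ha0]
  · intro m hm
    have hm' : φ (m : ℤ) * pow2 𝓕.F m a 1 ≠ 0 := hm
    have h2 : pow2 𝓕.F m a 1 ≠ 0 := fun hc => hm' (by rw [hc, mul_zero])
    by_contra hcon
    apply h2
    rw [pow2_F_b1 𝓕 m a, 𝓕.F_supp (a - m + 1) 1 (Or.inl (by omega)), mul_zero]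

end
end Final
end GAux


/-- there is a unique `G(z,w) ∈ R⟦z,w⟧` with `F(z,ι(w)) = G(z,w)·(z-w)`;
any such `G` is a unit of `R⟦z,w⟧`, its diagonal `G(z,z)` equals `F^{0,1}(z,0)⁻¹`
(expressed by `G(z,z)·F^{0,1}(z,0) = 1`), and whenever `φ` is a logarithm of `F`
(e.g. when `R` is a `ℚ`-algebra), `G(z,z) = φ'(z)`. -/
theorem G_series (R : Type*) [CommRing R] (𝓕 : FormalGroupLaw R) :
    (∃! G : ℤ → ℤ → R, (∀ i j : ℤ, i < 0 ∨ j < 0 → G i j = 0) ∧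
      𝓕.Fzi = mulS2 (zmw R) G) ∧
    (∀ G : ℤ → ℤ → R, (∀ i j : ℤ, i < 0 ∨ j < 0 → G i j = 0) →
      𝓕.Fzi = mulS2 (zmw R) G →
      (∃ H : ℤ → ℤ → R, (∀ i j : ℤ, i < 0 ∨ j < 0 → H i j = 0) ∧
          mulS2 G H = oneS2 R) ∧
      mulS (fun i => 𝓕.F i 1) (fun n => ∑ᶠ i : ℤ, G i (n - i)) = oneS R ∧
      (∀ φ : ℤ → R, 𝓕.IsLogarithm φ →
        (fun n => ∑ᶠ i : ℤ, G i (n - i)) = fderiv1 φ)) := by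
  classical
  constructor
  · -- existence and uniqueness
    refine ⟨GAux.Gd 𝓕, ⟨GAux.ps2_Gd 𝓕, GAux.Gd_solves 𝓕⟩, ?_⟩
    intro G hGpair
    exact GAux.G_unique 𝓕 G (GAux.Gd 𝓕) hGpair.1 (GAux.ps2_Gd 𝓕) hGpair.2 (GAux.Gd_solves 𝓕)
  · intro G hG hFG
    have hGps : GAux.PS2 G := hG
    refine ⟨?_, ?_, ?_⟩
    · -- G is a unit
      have hrel : ∀ a b : ℤ, 𝓕.Fzi a b = G (a - 1) b - G a (b - 1) := by
        intro a b
        have h := congrFun (congrFun hFG a) b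
        rw [GAux.mulS2_zmw] at h
        exact h
      have hG00 : G 0 0 = 1 := by
        have h10 := hrel 1 0
        rw [show (1 : ℤ) - 1 = 0 by ring, show (0 : ℤ) - 1 = -1 by ring,
          hG 1 (-1) (Or.inr (by norm_num)), sub_zero] at h10
        have hfzi : 𝓕.Fzi 1 0 = 1 := by
          rw [GAux.Fzi_range 𝓕 1 0 1 (by norm_num), Finset.sum_range_one]
          show 𝓕.F 1 ((0 : ℕ) : ℤ) * oneS R 0 = 1
          rw [Nat.cast_zero, show oneS R 0 = 1 from if_pos rfl, GAux.F10 𝓕, one_mul]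
        rw [← h10, hfzi]
      exact GAux.inv_exists hGps hG00
    · -- diagonal equals the inverse of F^{0,1}(z,0)
      exact GAux.main_identity 𝓕 G hGps hFG
    · -- logarithm
      intro φ hφ
      show GAux.dg G = fderiv1 φ
      have hD := GAux.main_identity 𝓕 G hGps hFG
      have hE := GAux.log_identity 𝓕 φ hφ
      have hA : GAux.PS1 (fun i : ℤ => 𝓕.F i 1) := fun i hi => 𝓕.F_supp i 1 (Or.inl hi)
      have hDs : GAux.PS1 (GAux.dg G) := GAux.ps1_dg hGps
      have hφs : GAux.PS1 (fderiv1 φ) := GAux.ps1_fderiv hφ.1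
      calc GAux.dg G = mulS (GAux.dg G) (oneS R) := (GAux.mulS_one hDs).symm
        _ = mulS (GAux.dg G) (mulS (fun i => 𝓕.F i 1) (fderiv1 φ)) := by rw [hE]
        _ = mulS (mulS (GAux.dg G) (fun i => 𝓕.F i 1)) (fderiv1 φ) :=
            (GAux.mulS_assoc hDs hA hφs).symm
        _ = mulS (mulS (fun i => 𝓕.F i 1) (GAux.dg G)) (fderiv1 φ) := by
            rw [GAux.mulS_comm hDs hA]
        _ = mulS (oneS R) (fderiv1 φ) := by rw [hD]
        _ = fderiv1 φ := GAux.one_mulS hφs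
end

section
/- Let F be a formal group law over a commutative ring R. Then F^{0,1}(z,w)·F^{1,0}(0,w) = F^{1,0}(z,w)·F^{0,1}(z,0) as an identity in R⟦z,w⟧ (where in the second factor on the left one substitutes z = 0 into F^{1,0}, obtaining a series in w, and in the second factor on the right one substitutes w = 0 into F^{0,1}, obtaining a series in z). -/
/-!
Coefficient-wise formal calculus for vertex `F`-algebras, following
M. Upmeier, "Vertex F-Algebras and Their Associated Lie Algebra".

Series in one, two or three variables are represented by their coefficient
functions `ℤ → R`, `ℤ → ℤ → R`, …; products are given by coefficient-wise
(finite) sums, expressed via `finsum` (`∑ᶠ`).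
-/

open scoped BigOperators

section AuxLemmas

open Function Set

variable {R : Type*} [CommRing R] (F : ℤ → ℤ → R)
  (hsupp : ∀ i j : ℤ, i < 0 ∨ j < 0 → F i j = 0)
  (hmodw : ∀ i : ℤ, F i 0 = if i = 1 then 1 else 0)
  (hcomm : ∀ i j : ℤ, F i j = F j i)

include hsupp in
lemma pow2_supp' : ∀ (k : ℕ) (i j : ℤ), (i < 0 ∨ j < 0) → pow2 F k i j = 0 := by
  intro k
  induction k with
  | zero =>
    intro i j hij
    simp only [pow2, oneS2]
    rw [if_neg]; omega
  | succ k ih =>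
    intro i j hij
    simp only [pow2, mulS2, smul_eq_mul]
    apply finsum_eq_zero_of_forall_eq_zero
    intro p
    by_cases hp : p.1 < 0 ∨ p.2 < 0
    · rw [hsupp _ _ hp, zero_mul]
    · rw [ih (i - p.1) (j - p.2) (by omega), mul_zero]

include hsupp hmodw in
lemma pow2_w0' : ∀ (k : ℕ) (i : ℤ), pow2 F k i 0 = if i = k then 1 else 0 := by
  intro k
  induction k with
  | zero => intro i; simp [pow2, oneS2]
  | succ k ih =>
    intro i
    simp only [pow2, mulS2, smul_eq_mul]
    rw [finsum_eq_single _ ((1 : ℤ), (0 : ℤ))]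
    · show F 1 0 * pow2 F k (i - 1) (0 - 0) = _
      rw [hmodw 1, if_pos rfl, one_mul]
      norm_num
      rw [ih]
      congr 1; simp only [eq_iff_iff]; push_cast; omega
    · intro p hp
      by_cases h1 : p.1 < 0 ∨ p.2 < 0
      · rw [hsupp _ _ h1, zero_mul]
      · by_cases h2 : p.2 = 0
        · have h3 : p.1 ≠ 1 := by
            intro h
            exact hp (by rcases p with ⟨x, y⟩; simp_all)
          rw [h2, hmodw p.1, if_neg h3, zero_mul]
        · rw [pow2_supp' F hsupp k _ _ (by right; omega), mul_zero]

include hcomm in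
lemma pow2_comm' : ∀ (k : ℕ) (i j : ℤ), pow2 F k i j = pow2 F k j i := by
  intro k
  induction k with
  | zero =>
    intro i j
    simp only [pow2, oneS2]
    exact if_congr and_comm rfl rfl
  | succ k ih =>
    intro i j
    simp only [pow2, mulS2, smul_eq_mul]
    rw [← finsum_comp_equiv (Equiv.prodComm ℤ ℤ)]
    apply finsum_congr
    intro p
    simp only [Equiv.prodComm_apply, Prod.fst_swap, Prod.snd_swap]
    rw [hcomm p.2 p.1, ih]

include hsupp hmodw hcomm in
lemma pow2_w1' : ∀ (k : ℕ) (b : ℤ), pow2 F k b 1 = (k : R) * F (b + 1 - k) 1 := by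
  intro k
  induction k with
  | zero => intro b; simp [pow2, oneS2]
  | succ k ih =>
    intro b
    simp only [pow2, mulS2, smul_eq_mul]
    rw [finsum_eq_finset_sum_of_support_subset _
      (s := {((1 : ℤ), (0 : ℤ)), ((b - k : ℤ), (1 : ℤ))})]
    · rw [Finset.sum_insert (by simp), Finset.sum_singleton]
      show F 1 0 * pow2 F k (b - 1) (1 - 0) + F (b - k) 1 * pow2 F k (b - (b - k)) (1 - 1) = _
      rw [hmodw 1, if_pos rfl, one_mul]
      norm_num
      rw [ih, show b - 1 + 1 - (k:ℤ) = b - ↑k by ring, pow2_w0' F hsupp hmodw,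
        hcomm (b - ↑k) 1]
      rw [if_pos rfl, mul_one]
      ring
    · intro p hp
      simp only [mem_support] at hp
      simp only [Finset.coe_insert, Finset.coe_singleton, Set.mem_insert_iff,
        Set.mem_singleton_iff]
      by_contra hmem
      push_neg at hmem
      obtain ⟨h1, h2⟩ := hmem
      apply hp
      by_cases hneg : p.1 < 0 ∨ p.2 < 0
      · rw [hsupp _ _ hneg, zero_mul]
      · by_cases hy0 : p.2 = 0
        · have hx : p.1 ≠ 1 := by
            intro h; exact h1 (by rcases p with ⟨x, y⟩; simp_all)
          rw [hy0, hmodw p.1, if_neg hx, zero_mul]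
        · by_cases hy1 : p.2 = 1
          · have hx : p.1 ≠ b - k := by
              intro h; exact h2 (by rcases p with ⟨x, y⟩; simp_all)
            rw [hy1, show (1:ℤ) - 1 = 0 by norm_num, pow2_w0' F hsupp hmodw k,
              if_neg (by omega), mul_zero]
          · rw [pow2_supp' F hsupp k _ _ (by right; omega), mul_zero]

omit [CommRing R] in
lemma finsum_int_eq_finsum_nat' {M : Type*} [AddCommMonoid M] (g : ℤ → M)
    (h : ∀ n : ℤ, n < 0 → g n = 0) : ∑ᶠ n : ℤ, g n = ∑ᶠ n : ℕ, g (n : ℤ) := by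
  rw [← finsum_mem_univ g, ← finsum_mem_range (f := g) (g := (Nat.cast : ℕ → ℤ))
    (fun m n hmn => by exact_mod_cast hmn)]
  apply finsum_mem_inter_support_eq'
  intro x hx
  simp only [mem_support] at hx
  simp only [Set.mem_univ, Set.mem_range, true_iff]
  have : ¬ x < 0 := fun hlt => hx (h x hlt)
  exact ⟨x.toNat, by omega⟩

include hsupp hmodw hcomm in
lemma key_identity (a b : ℤ) :
    (∑ᶠ j : ℤ, d01 F a (b - j) * d10 F 0 j)
      = ∑ᶠ n : ℕ, F a (n : ℤ) * pow2 F n b 1 := by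
  have step1 : (∑ᶠ j : ℤ, d01 F a (b - j) * d10 F 0 j)
      = ∑ᶠ n : ℤ, F a n * (((n : ℤ) : R) * F (b + 1 - n) 1) := by
    rw [← finsum_comp_equiv (Equiv.subLeft (b + 1))
      (f := fun j => d01 F a (b - j) * d10 F 0 j)]
    apply finsum_congr; intro n
    simp only [Equiv.subLeft_apply, d01, d10]
    rw [show b - (b + 1 - n) + 1 = n by ring, show (0:ℤ) + 1 = 1 by norm_num,
      hcomm 1 (b + 1 - n)]
    push_cast
    ring
  rw [step1, finsum_int_eq_finsum_nat' _ (fun n hn => by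
    rw [hsupp a n (Or.inr hn), zero_mul])]
  apply finsum_congr; intro n
  rw [pow2_w1' F hsupp hmodw hcomm n b]
  push_cast
  ring

end AuxLemmas

/-- `F^{0,1}(z,w)·F^{1,0}(0,w) = F^{1,0}(z,w)·F^{0,1}(z,0)` in `R⟦z,w⟧`
(coefficient of `z^a w^b`; the second factor on each side is a one-variable series). -/
theorem F_partials_identity (R : Type*) [CommRing R] (𝓕 : FormalGroupLaw R) (a b : ℤ) :
    (∑ᶠ j : ℤ, d01 𝓕.F a (b - j) * d10 𝓕.F 0 j)
      = ∑ᶠ i : ℤ, d10 𝓕.F (a - i) b * d01 𝓕.F i 0 := by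
  have hs := 𝓕.F_supp
  have hm := 𝓕.F_modw
  have hc := 𝓕.F_comm
  have hrhs : (∑ᶠ i : ℤ, d10 𝓕.F (a - i) b * d01 𝓕.F i 0)
      = ∑ᶠ j : ℤ, d01 𝓕.F b (a - j) * d10 𝓕.F 0 j := by
    apply finsum_congr; intro i
    simp only [d01, d10]
    rw [show (0:ℤ) + 1 = 1 by norm_num, hc b (a - i + 1), hc 1 i]
  rw [key_identity 𝓕.F hs hm hc a b, hrhs, key_identity 𝓕.F hs hm hc b a,
    ← 𝓕.F_assoc a b 1, ← 𝓕.F_assoc b a 1]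
  apply finsum_congr; intro m
  rw [pow2_comm' 𝓕.F hc m a b]
end
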